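/- arXiv:0807.3580 — 8 statements merged into one kernel-verified Lean document; each statement's English description precedes it below -/
import Mathlib

section
/- If I ∈ P_n is a proper pattern (i.e., (i,i) ∉ I for at least one i ∈ {1,…,n}) and I is n-universal, then |I| ≤ n(n−1)/2. -/
/-!
Dimension count. Householder QR writes every unitary `U` as `D * G` with `D` diagonal unitary
and `G` the product of the reflections along the rows of `1 + N`, `N` strictly lower triangular;
these `N` form a complex space of dimension `n(n-1)/2`. If `U A U*` vanishes on `I`, so does
`D* U A U* D`; hence every traceless `A` lies in the image of the `C¹` map
`(N, Y) ↦ G(N)* Y G(N)` with `Y ∈ L_I(n)`. For a proper pattern the trace is independent of the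
entries on `I`, so `L_I(n)` has complex dimension `n² - |I| - 1`. As `C¹` maps do not raise
Hausdorff dimension, comparing real dimensions gives `2(n² - 1) ≤ n(n-1) + 2(n² - |I| - 1)`.
-/

/-- A pattern `I` (finite set of 1-based positions) is `n`-universal if every traceless
complex `n × n` matrix is unitarily similar to a matrix vanishing on all positions of `I`. -/
def IsUniversal (n : ℕ) (I : Finset (ℕ × ℕ)) : Prop :=
  ∀ A : Matrix (Fin n) (Fin n) ℂ, A.trace = 0 →
    ∃ U ∈ Matrix.unitaryGroup (Fin n) ℂ,
      ∀ i j : Fin n, ((i : ℕ) + 1, (j : ℕ) + 1) ∈ I → (U * A * star U) i j = 0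

open Matrix
open Module (finrank)
open scoped ComplexOrder

noncomputable section

namespace PatternUniversality

section LineReflection

variable {m : Type*} [Fintype m] [DecidableEq m]

/- Minus the Householder reflection along `u`: acting on row vectors from the right, it fixes `u`
and negates its orthogonal complement (see `vecMul_lineReflection`). -/
def lineReflection (u : m → ℂ) : Matrix m m ℂ :=
  (2 / (star u ⬝ᵥ u)) • vecMulVec (star u) u - 1

lemma lineReflection_conjTranspose (u : m → ℂ) : (lineReflection u)ᴴ = lineReflection u := by
  simp only [lineReflection, conjTranspose_sub, conjTranspose_smul, conjTranspose_one,
    conjTranspose_vecMulVec, star_star, star_div₀, star_ofNat, ← star_dotProduct]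

lemma lineReflection_mul_self {u : m → ℂ} (hu : u ≠ 0) :
    lineReflection u * lineReflection u = 1 := by
  have hq : star u ⬝ᵥ u ≠ 0 := mt dotProduct_star_self_eq_zero.1 hu
  have hsq : vecMulVec (star u) u * vecMulVec (star u) u =
      (star u ⬝ᵥ u) • vecMulVec (star u) u := by
    rw [vecMulVec_mul_vecMulVec, dotProduct_comm, ← vecMulVec_smul]
  have hcoeff : 2 / (star u ⬝ᵥ u) * (2 / (star u ⬝ᵥ u)) * (star u ⬝ᵥ u) =
      2 / (star u ⬝ᵥ u) + 2 / (star u ⬝ᵥ u) := by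
    field_simp
    ring
  simp only [lineReflection, sub_mul, mul_sub, smul_mul_smul_comm, hsq, smul_smul, mul_one,
    one_mul]
  rw [hcoeff, add_smul]
  abel

lemma lineReflection_mem_unitaryGroup {u : m → ℂ} (hu : u ≠ 0) :
    lineReflection u ∈ unitaryGroup m ℂ := by
  rw [mem_unitaryGroup_iff, star_eq_conjTranspose, lineReflection_conjTranspose,
    lineReflection_mul_self hu]

lemma lineReflection_smul {t : ℂ} (ht : t ≠ 0) (u : m → ℂ) :
    lineReflection (t • u) = lineReflection u := by
  have ht' : star t ≠ 0 := star_ne_zero.2 ht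
  simp only [lineReflection, star_smul, smul_dotProduct, dotProduct_smul, smul_vecMulVec,
    vecMulVec_smul, smul_smul, smul_eq_mul]
  congr 2
  by_cases hq : star u ⬝ᵥ u = 0
  · simp [hq]
  · field_simp

lemma vecMul_lineReflection (v u : m → ℂ) :
    v ᵥ* lineReflection u = (2 / (star u ⬝ᵥ u) * (v ⬝ᵥ star u)) • u - v := by
  rw [lineReflection, vecMul_sub, vecMul_one, vecMul_smul, vecMul_vecMulVec, smul_smul]

lemma lineReflection_row_of_eq_zero {u : m → ℂ} {r : m} (hr : u r = 0) :
    lineReflection u r = -Pi.single r 1 := by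
  ext b
  simp [lineReflection, vecMulVec_apply, hr, one_eq_pi_single]

lemma exists_unit_mul_norm_eq (z : ℂ) : ∃ e : ℂ, star e * e = 1 ∧ (‖z‖ : ℂ) * e = z := by
  refine ⟨Complex.exp (z.arg * Complex.I), ?_, Complex.norm_mul_exp_arg_mul_I z⟩
  rw [← starRingEnd_apply, Complex.conj_mul', Complex.norm_exp_ofReal_mul_I]
  simp

/- With `v j = s e`, `s ≥ 0` and `|e| = 1`, the reflection along `w = star e • v + e_j` sends `v`
to `e e_j`. This choice of sign makes `w j = s + 1 ≠ 0`, so `w` rescales to `x + e_j` with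
`x j = 0`. -/
lemma exists_vecMul_lineReflection_eq_single {v : m → ℂ} (hv : star v ⬝ᵥ v = 1) (j : m) :
    ∃ x : m → ℂ, x j = 0 ∧ (∀ a, v a = 0 → x a = 0) ∧
      ∃ c : ℂ, v ᵥ* lineReflection (x + Pi.single j 1) = Pi.single j c := by
  obtain ⟨e, he, hve⟩ := exists_unit_mul_norm_eq (v j)
  have hs : (‖v j‖ : ℂ) + 1 ≠ 0 := by exact_mod_cast (by positivity : (0 : ℝ) < ‖v j‖ + 1).ne'
  set s : ℂ := (‖v j‖ : ℂ)
  have hsv : star e * v j = s := by rw [← hve, mul_left_comm, he, mul_one]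
  have hss : star s = s := Complex.conj_ofReal _
  have hsv' : e * star (v j) = s := by rw [← hss, ← hsv, star_mul', star_star, mul_comm]
  set w := star e • v + Pi.single j 1 with hw
  have hww : star w ⬝ᵥ w = 2 * (s + 1) := by
    simp only [hw, star_add, star_smul, star_star, ← Pi.single_star, star_one, add_dotProduct,
      dotProduct_add, smul_dotProduct, dotProduct_smul, dotProduct_single, single_dotProduct, hv,
      smul_eq_mul, Pi.add_apply, Pi.smul_apply, Pi.star_apply, Pi.single_eq_same]
    linear_combination he + hsv + hsv'
  have hvw : v ⬝ᵥ star w = e * (s + 1) := by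
    rw [dotProduct_comm]
    simp only [hw, star_add, star_smul, star_star, ← Pi.single_star, star_one, add_dotProduct,
      smul_dotProduct, single_dotProduct, smul_eq_mul, hv]
    linear_combination -hve
  have hvR : v ᵥ* lineReflection w = Pi.single j e := by
    rw [vecMul_lineReflection, hww, hvw,
      show 2 / (2 * (s + 1)) * (e * (s + 1)) = e by field_simp, hw, smul_add, smul_smul,
      mul_comm, he, one_smul, ← Pi.single_smul, smul_eq_mul, mul_one, add_sub_cancel_left]
  have hxj : ((s + 1)⁻¹ • w - Pi.single j 1 : m → ℂ) j = 0 := by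
    simp only [hw, Pi.sub_apply, Pi.smul_apply, Pi.add_apply, Pi.single_eq_same, smul_eq_mul,
      hsv]
    field_simp
    ring
  refine ⟨(s + 1)⁻¹ • w - Pi.single j 1, hxj, fun a ha => ?_, e, ?_⟩
  · rcases eq_or_ne a j with rfl | hne
    · exact hxj
    · simp [hw, ha, Pi.single_eq_of_ne hne]
  · rw [sub_add_cancel, lineReflection_smul (inv_ne_zero hs), hvR]

end LineReflection

section Unitary

variable {m : Type*} [Fintype m] [DecidableEq m] {U : Matrix m m ℂ}

lemma row_dotProduct_star_row (hU : U ∈ unitaryGroup m ℂ) (a b : m) :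
    U a ⬝ᵥ star (U b) = (1 : Matrix m m ℂ) a b := by
  rw [← mem_unitaryGroup_iff.1 hU]
  rfl

lemma apply_eq_zero_of_row_eq_single (hU : U ∈ unitaryGroup m ℂ) {b : m} {c : ℂ}
    (hb : U b = Pi.single b c) {a : m} (ha : a ≠ b) : U a b = 0 := by
  have horth := row_dotProduct_star_row hU a b
  have hnorm := row_dotProduct_star_row hU b b
  rw [hb, ← Pi.single_star, dotProduct_single] at horth hnorm
  rw [one_apply_ne ha] at horth
  rw [one_apply_eq, Pi.single_eq_same] at hnorm
  exact (mul_eq_zero.1 horth).resolve_right (right_ne_zero_of_mul_eq_one hnorm)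

end Unitary

section Subspaces

lemma finrank_le_card_mul_of_eq_zero_on {K V m m' : Type*} [Field K] [AddCommGroup V]
    [Module K V] [FiniteDimensional K V] (P : Submodule K (Matrix m m' V)) (T : Finset (m × m'))
    (h : ∀ X ∈ P, (∀ p ∈ T, X p.1 p.2 = 0) → X = 0) : finrank K P ≤ T.card * finrank K V := by
  let restrict : P →ₗ[K] (T → V) :=
    (LinearMap.pi fun p : T => entryLinearMap K V p.1.1 p.1.2).comp P.subtype
  have hinj : Function.Injective restrict := by
    refine (injective_iff_map_eq_zero restrict).2 fun X hX => Subtype.ext (h X X.2 fun p hp => ?_)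
    exact congr_fun hX ⟨p, hp⟩
  calc finrank K P ≤ finrank K (T → V) := LinearMap.finrank_le_finrank_of_injective hinj
    _ = T.card * finrank K V := by simp [Module.finrank_pi_fintype]

lemma finrank_restrictScalars_real {E : Type*} [AddCommGroup E] [Module ℂ E]
    (p : Submodule ℂ E) : finrank ℝ (p.restrictScalars ℝ) = 2 * finrank ℂ p :=
  ((p.restrictScalarsEquiv ℝ ℂ).restrictScalars ℝ).finrank_eq.trans (finrank_real_of_complex p)

variable {n : ℕ}

def strictLowerSubspace (n : ℕ) : Submodule ℂ (Matrix (Fin n) (Fin n) ℂ) where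
  carrier := {N | ∀ i a, i ≤ a → N i a = 0}
  add_mem' hN hN' i a h := by simp [hN i a h, hN' i a h]
  zero_mem' _ _ _ := rfl
  smul_mem' c N hN i a h := by simp [hN i a h]

lemma card_filter_snd_lt_fst :
    (Finset.univ.filter fun p : Fin n × Fin n => p.2 < p.1).card = n * (n - 1) / 2 := by
  rw [Finset.card_filter, Fintype.sum_prod_type]
  simp_rw [← Finset.card_filter, Finset.filter_gt_eq_Iio, Fin.card_Iio]
  rw [Fin.sum_univ_eq_sum_range (fun i => i) n, Finset.sum_range_id]

lemma finrank_strictLowerSubspace_le : finrank ℂ (strictLowerSubspace n) ≤ n * (n - 1) / 2 := by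
  have := finrank_le_card_mul_of_eq_zero_on (strictLowerSubspace n)
    (Finset.univ.filter fun p : Fin n × Fin n => p.2 < p.1) fun N hN hT => by
      ext i a
      rcases le_or_gt i a with hia | hai
      · exact hN i a hia
      · exact hT (i, a) (by simpa using hai)
  simpa [card_filter_snd_lt_fst] using this

lemma one_add_row_ne_zero {N : Matrix (Fin n) (Fin n) ℂ} (hN : N ∈ strictLowerSubspace n)
    (i : Fin n) : (1 + N) i ≠ 0 := fun h => by
  simpa [hN i i le_rfl] using congr_fun h i

lemma updateRow_mem_strictLowerSubspace {N : Matrix (Fin n) (Fin n) ℂ}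
    (hN : N ∈ strictLowerSubspace n) {i : Fin n} {x : Fin n → ℂ} (hx : ∀ a, i ≤ a → x a = 0) :
    updateRow N i x ∈ strictLowerSubspace n := fun k a hka => by
  rcases eq_or_ne k i with rfl | hk
  · rw [updateRow_self]
    exact hx a hka
  · rw [updateRow_ne hk]
    exact hN k a hka

variable {m : Type*} [Fintype m]

/- The paper's `L_S(n)`; in particular `patternSubspace ∅` is `L(n)`. -/
def patternSubspace (S : Finset (m × m)) : Submodule ℂ (Matrix m m ℂ) where
  carrier := {X | X.trace = 0 ∧ ∀ p ∈ S, X p.1 p.2 = 0}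
  add_mem' hX hY := ⟨by simp [trace_add, hX.1, hY.1], fun p hp => by simp [hX.2 p hp, hY.2 p hp]⟩
  zero_mem' := ⟨trace_zero _ _, fun _ _ => rfl⟩
  smul_mem' c X hX := ⟨by simp [trace_smul, hX.1], fun p hp => by simp [hX.2 p hp]⟩

lemma le_finrank_patternSubspace (S : Finset (m × m)) :
    Fintype.card m * Fintype.card m ≤ finrank ℂ (patternSubspace S) + S.card + 1 := by
  let φ : Matrix m m ℂ →ₗ[ℂ] (S → ℂ) × ℂ :=
    (LinearMap.pi fun p : S => entryLinearMap ℂ ℂ p.1.1 p.1.2).prod (traceLinearMap m ℂ ℂ)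
  have hker : LinearMap.ker φ ≤ patternSubspace S := fun X hX => by
    simp only [LinearMap.mem_ker, φ, Prod.ext_iff, funext_iff] at hX
    exact ⟨hX.2, fun p hp => hX.1 ⟨p, hp⟩⟩
  have hrange : finrank ℂ (LinearMap.range φ) ≤ S.card + 1 :=
    (Submodule.finrank_le _).trans (by simp)
  have := φ.finrank_range_add_finrank_ker
  have := Submodule.finrank_mono hker
  simp only [Module.finrank_matrix, Module.finrank_self] at *
  omega

/- Its trace being `0`, a matrix of `patternSubspace S` is determined by its entries off
`S ∪ {(i, i)}`. -/
lemma finrank_patternSubspace_le [DecidableEq m] {S : Finset (m × m)} {i : m}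
    (hi : (i, i) ∉ S) :
    finrank ℂ (patternSubspace S) + S.card + 1 ≤ Fintype.card m * Fintype.card m := by
  have := finrank_le_card_mul_of_eq_zero_on (patternSubspace S) (Sᶜ.erase (i, i))
    fun X hX hT => by
      have hoff : ∀ p : m × m, p ≠ (i, i) → X p.1 p.2 = 0 := fun p hp => by
        by_cases hpS : p ∈ S
        · exact hX.2 p hpS
        · exact hT p (by simp [hp, hpS])
      ext a b
      by_cases hab : (a, b) = (i, i)
      · obtain ⟨rfl, rfl⟩ := Prod.mk.inj hab
        have htrace : X.trace = X b b :=
          Finset.sum_eq_single b (fun c _ hc => hoff (c, c) (by simpa using hc)) (by simp)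
        rw [Matrix.zero_apply, ← htrace, hX.1]
      · exact hoff (a, b) hab
  have hcard : (Sᶜ.erase (i, i)).card + S.card + 1 = Fintype.card m * Fintype.card m := by
    rw [Finset.card_erase_of_mem (by simpa using hi), Finset.card_compl, Fintype.card_prod]
    have := Finset.card_lt_univ_of_notMem hi
    rw [Fintype.card_prod] at this
    omega
  simp only [Module.finrank_self, mul_one] at this
  omega

lemma star_mul_mul_mem_patternSubspace [DecidableEq m] {S : Finset (m × m)}
    {D Y : Matrix m m ℂ} (hD : D.IsDiag) (hDu : D ∈ unitaryGroup m ℂ)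
    (hY : Y ∈ patternSubspace S) : star D * Y * D ∈ patternSubspace S := by
  refine ⟨?_, fun p hp => ?_⟩
  · rw [trace_mul_cycle, mem_unitaryGroup_iff.1 hDu, one_mul]
    exact hY.1
  · rw [← hD.diagonal_diag, star_eq_conjTranspose, diagonal_conjTranspose]
    simp [diagonal_mul, mul_diagonal, hY.2 p hp]

end Subspaces

section Decomposition

variable {n : ℕ}

/- `lineReflection (M 0) * ⋯ * lineReflection (M (j - 1))`, factors of index `≥ n` being `1`. -/
def rowReflProd (M : Matrix (Fin n) (Fin n) ℂ) : ℕ → Matrix (Fin n) (Fin n) ℂ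
  | 0 => 1
  | j + 1 => rowReflProd M j * if h : j < n then lineReflection (M ⟨j, h⟩) else 1

lemma rowReflProd_congr {M M' : Matrix (Fin n) (Fin n) ℂ} {j : ℕ}
    (h : ∀ i : Fin n, (i : ℕ) < j → M i = M' i) : rowReflProd M j = rowReflProd M' j := by
  induction j with
  | zero => rfl
  | succ j ih =>
    simp only [rowReflProd, ih fun i hi => h i (by omega)]
    split_ifs
    · rw [h _ (by simp)]
    · rfl

lemma rowReflProd_mem_unitaryGroup {M : Matrix (Fin n) (Fin n) ℂ} (hM : ∀ i, M i ≠ 0) :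
    ∀ j, rowReflProd M j ∈ unitaryGroup (Fin n) ℂ
  | 0 => one_mem _
  | j + 1 => by
    refine mul_mem (rowReflProd_mem_unitaryGroup hM j) ?_
    split_ifs
    · exact lineReflection_mem_unitaryGroup (hM _)
    · exact one_mem _

/- The rows below row `j` only change sign, as the reflection vector vanishes there. -/
lemma exists_mul_lineReflection_rows_eq_single {U : Matrix (Fin n) (Fin n) ℂ}
    (hU : U ∈ unitaryGroup (Fin n) ℂ) (j : Fin n)
    (hrows : ∀ r, j < r → ∃ c, U r = Pi.single r c) :
    ∃ x : Fin n → ℂ, (∀ a, j ≤ a → x a = 0) ∧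
      ∀ r, j ≤ r → ∃ c : ℂ,
        (U * lineReflection (x + Pi.single j 1) : Matrix (Fin n) (Fin n) ℂ) r = Pi.single r c := by
  have hv : star (U j) ⬝ᵥ U j = 1 := by
    rw [dotProduct_comm, row_dotProduct_star_row hU, one_apply_eq]
  have hsupp : ∀ r, j < r → U j r = 0 := fun r hr =>
    have ⟨_, hc⟩ := hrows r hr
    apply_eq_zero_of_row_eq_single hU hc hr.ne
  obtain ⟨x, hxj, hx, c, hxc⟩ := exists_vecMul_lineReflection_eq_single hv j
  refine ⟨x, fun a ha => ha.eq_or_lt.elim (fun h => h ▸ hxj) fun h => hx a (hsupp a h),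
    fun r hr => hr.eq_or_lt.elim (fun h => h ▸ ⟨c, hxc⟩) fun hr => ?_⟩
  obtain ⟨d, hd⟩ := hrows r hr
  have hu : (x + Pi.single j 1 : Fin n → ℂ) r = 0 := by
    simp [hx r (hsupp r hr), Pi.single_eq_of_ne hr.ne']
  refine ⟨-d, ?_⟩
  rw [mul_apply_eq_vecMul, hd, single_vecMul, row, lineReflection_row_of_eq_zero hu, smul_neg,
    ← Pi.single_smul, smul_eq_mul, mul_one, Pi.single_neg]

lemma exists_isDiag_mul_star_rowReflProd (j : ℕ) {U : Matrix (Fin n) (Fin n) ℂ}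
    (hU : U ∈ unitaryGroup (Fin n) ℂ) (hrows : ∀ r : Fin n, j ≤ r → ∃ c, U r = Pi.single r c) :
    ∃ N ∈ strictLowerSubspace n, (U * star (rowReflProd (1 + N) j)).IsDiag := by
  induction j generalizing U with
  | zero =>
    refine ⟨0, zero_mem _, fun a b hab => ?_⟩
    obtain ⟨c, hc⟩ := hrows a (Nat.zero_le _)
    simp [rowReflProd, hc, Pi.single_eq_of_ne hab.symm]
  | succ j ih =>
    by_cases hj : j < n
    swap
    · obtain ⟨N, hN, hdiag⟩ := ih hU fun r hr => absurd r.isLt (by omega)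
      exact ⟨N, hN, by simpa [rowReflProd, hj] using hdiag⟩
    set jf : Fin n := ⟨j, hj⟩
    obtain ⟨x, hx, hrows'⟩ := exists_mul_lineReflection_rows_eq_single hU jf hrows
    have hR : lineReflection (x + Pi.single jf 1) ∈ unitaryGroup (Fin n) ℂ :=
      lineReflection_mem_unitaryGroup fun h => by simpa [hx jf le_rfl] using congr_fun h jf
    obtain ⟨N, hN, hdiag⟩ := ih (mul_mem hU hR) hrows'
    refine ⟨updateRow N jf x, updateRow_mem_strictLowerSubspace hN hx, ?_⟩
    have hrow : (1 + updateRow N jf x) jf = x + Pi.single jf 1 := by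
      ext b
      simp [one_eq_pi_single, add_comm]
    have hprefix : rowReflProd (1 + updateRow N jf x) j = rowReflProd (1 + N) j :=
      rowReflProd_congr fun i hi =>
        congrArg ((1 : Matrix (Fin n) (Fin n) ℂ) i + ·) (updateRow_ne (Fin.ne_of_lt hi))
    rw [rowReflProd, dif_pos hj, hprefix, hrow, star_mul,
      star_eq_conjTranspose (lineReflection _), lineReflection_conjTranspose, ← mul_assoc]
    exact hdiag

def reflProdConj (N Y : Matrix (Fin n) (Fin n) ℂ) : Matrix (Fin n) (Fin n) ℂ :=
  (rowReflProd (1 + N) n)ᴴ * Y * rowReflProd (1 + N) n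

lemma exists_reflProdConj_eq {S : Finset (Fin n × Fin n)}
    (h : ∀ A ∈ patternSubspace (∅ : Finset (Fin n × Fin n)),
      ∃ U ∈ unitaryGroup (Fin n) ℂ, U * A * star U ∈ patternSubspace S)
    {A : Matrix (Fin n) (Fin n) ℂ} (hA : A ∈ patternSubspace (∅ : Finset (Fin n × Fin n))) :
    ∃ N ∈ strictLowerSubspace n, ∃ Y ∈ patternSubspace S, reflProdConj N Y = A := by
  obtain ⟨U, hU, hY⟩ := h A hA
  obtain ⟨N, hN, hdiag⟩ :=
    exists_isDiag_mul_star_rowReflProd n hU fun r hr => absurd r.isLt (by omega)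
  set G := rowReflProd (1 + N) n
  have hG : G ∈ unitaryGroup (Fin n) ℂ := rowReflProd_mem_unitaryGroup (one_add_row_ne_zero hN) n
  refine ⟨N, hN, _, star_mul_mul_mem_patternSubspace hdiag (mul_mem hU (Unitary.star_mem hG)) hY,
    ?_⟩
  calc Gᴴ * (star (U * star G) * (U * A * star U) * (U * star G)) * G
      = (star G * G) * (star U * U) * A * (star U * U) * (star G * G) := by
        simp only [star_mul, star_eq_conjTranspose, conjTranspose_conjTranspose, mul_assoc]
    _ = A := by
        rw [mem_unitaryGroup_iff'.1 hU, mem_unitaryGroup_iff'.1 hG, one_mul, mul_one, one_mul,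
          mul_one]

end Decomposition

lemma finrank_le_of_subset_range {E F : Type*} [NormedAddCommGroup E] [NormedSpace ℝ E]
    [FiniteDimensional ℝ E] [NormedAddCommGroup F] [NormedSpace ℝ F] [FiniteDimensional ℝ F]
    {f : E → F} (hf : ContDiff ℝ 1 f) {V : Submodule ℝ F} (hV : (V : Set F) ⊆ Set.range f) :
    finrank ℝ V ≤ finrank ℝ E := by
  have hdimV : dimH (V : Set F) = finrank ℝ V := by
    rw [show (V : Set F) = ((↑) : V → F) '' Set.univ by simp, isometry_subtype_coe.dimH_image,
      Real.dimH_univ_eq_finrank]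
  exact_mod_cast hdimV ▸ (dimH_mono hV).trans hf.dimH_range_le

section Smoothness

attribute [local instance] Matrix.frobeniusNormedAddCommGroup Matrix.frobeniusNormedSpace
  Matrix.frobeniusNormedRing Matrix.frobeniusNormedAlgebra

variable {m : Type*} [Fintype m]
  {P : Type*} [NormedAddCommGroup P] [NormedSpace ℝ P] {s : Set P} {k : WithTop ℕ∞}

lemma contDiffOn_matrix_iff {f : P → Matrix m m ℂ} :
    ContDiffOn ℝ k f s ↔ ∀ a b, ContDiffOn ℝ k (fun p => f p a b) s := by
  let e : Matrix m m ℂ ≃L[ℝ] (m → m → ℂ) := (ofLinearEquiv ℝ).symm.toContinuousLinearEquiv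
  rw [← e.comp_contDiffOn_iff, contDiffOn_pi]
  refine forall_congr' fun a => ?_
  rw [contDiffOn_pi]
  rfl

lemma contDiff_conjTranspose : ContDiff ℝ k (conjTranspose : Matrix m m ℂ → Matrix m m ℂ) :=
  contDiffOn_univ.1 <| contDiffOn_matrix_iff.2 fun a b =>
    Complex.conjCLE.contDiff.comp_contDiffOn (contDiffOn_matrix_iff.1 contDiffOn_id b a)

lemma contDiffOn_lineReflection [DecidableEq m] {u : P → m → ℂ} (hu : ContDiffOn ℝ k u s)
    (hu0 : ∀ p ∈ s, u p ≠ 0) : ContDiffOn ℝ k (fun p => lineReflection (u p)) s := by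
  have hcoord : ∀ a, ContDiffOn ℝ k (fun p => u p a) s := contDiffOn_pi.1 hu
  have hconj : ∀ a, ContDiffOn ℝ k (fun p => star (u p a)) s := fun a =>
    Complex.conjCLE.contDiff.comp_contDiffOn (hcoord a)
  have hnorm : ContDiffOn ℝ k (fun p => star (u p) ⬝ᵥ u p) s :=
    ContDiffOn.sum fun a _ => (hconj a).mul (hcoord a)
  have hinv : ContDiffOn ℝ k (fun p => (star (u p) ⬝ᵥ u p)⁻¹) s :=
    hnorm.inv fun p hp => mt dotProduct_star_self_eq_zero.1 (hu0 p hp)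
  refine contDiffOn_matrix_iff.2 fun a b => ?_
  simp only [lineReflection, Matrix.sub_apply, Matrix.smul_apply, vecMulVec_apply, smul_eq_mul,
    div_eq_mul_inv]
  exact ((contDiffOn_const.mul hinv).mul ((hconj a).mul (hcoord b))).sub contDiffOn_const

variable {n : ℕ}

lemma contDiffOn_rowReflProd {M : P → Matrix (Fin n) (Fin n) ℂ} (hM : ContDiffOn ℝ k M s)
    (hM0 : ∀ p ∈ s, ∀ i, M p i ≠ 0) : ∀ j, ContDiffOn ℝ k (fun p => rowReflProd (M p) j) s
  | 0 => contDiffOn_const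
  | j + 1 => by
    refine (contDiffOn_rowReflProd hM hM0 j).mul ?_
    split_ifs
    · exact contDiffOn_lineReflection (contDiffOn_pi.2 fun b => contDiffOn_matrix_iff.1 hM _ b)
        fun p hp => hM0 p hp _
    · exact contDiffOn_const

lemma contDiff_reflProdConj (S : Finset (Fin n × Fin n)) :
    ContDiff ℝ k fun p : (strictLowerSubspace n).restrictScalars ℝ ×
      (patternSubspace S).restrictScalars ℝ =>
        reflProdConj (p.1 : Matrix (Fin n) (Fin n) ℂ) p.2 := by
  have hG : ContDiffOn ℝ k (fun N : Matrix (Fin n) (Fin n) ℂ => rowReflProd (1 + N) n)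
      (strictLowerSubspace n) :=
    contDiffOn_rowReflProd (M := fun N => 1 + N) (contDiffOn_const.add contDiffOn_id)
      (fun _ hN => one_add_row_ne_zero hN) n
  have hG' : ContDiff ℝ k fun p : (strictLowerSubspace n).restrictScalars ℝ ×
      (patternSubspace S).restrictScalars ℝ =>
        rowReflProd (1 + (p.1 : Matrix (Fin n) (Fin n) ℂ)) n :=
    hG.comp_contDiff (((strictLowerSubspace n).restrictScalars ℝ).subtypeL.contDiff.comp
      contDiff_fst) fun p => p.1.2
  exact ((contDiff_conjTranspose.comp hG').mul
    (((patternSubspace S).restrictScalars ℝ).subtypeL.contDiff.comp contDiff_snd)).mul hG'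

lemma card_le_of_forall_exists_unitary_mem_patternSubspace {S : Finset (Fin n × Fin n)}
    {i : Fin n} (hi : (i, i) ∉ S)
    (h : ∀ A ∈ patternSubspace (∅ : Finset (Fin n × Fin n)),
      ∃ U ∈ unitaryGroup (Fin n) ℂ, U * A * star U ∈ patternSubspace S) :
    S.card ≤ n * (n - 1) / 2 := by
  have hdim := finrank_le_of_subset_range (contDiff_reflProdConj (k := 1) S)
    (V := (patternSubspace (∅ : Finset (Fin n × Fin n))).restrictScalars ℝ) fun A hA => by
      obtain ⟨N, hN, Y, hY, rfl⟩ := exists_reflProdConj_eq h hA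
      exact ⟨(⟨N, hN⟩, ⟨Y, hY⟩), rfl⟩
  rw [Module.finrank_prod, finrank_restrictScalars_real, finrank_restrictScalars_real,
    finrank_restrictScalars_real] at hdim
  have := le_finrank_patternSubspace (∅ : Finset (Fin n × Fin n))
  have := finrank_patternSubspace_le hi
  have := finrank_strictLowerSubspace_le (n := n)
  simp only [Fintype.card_fin, Finset.card_empty] at *
  omega

end Smoothness

def finPattern (n : ℕ) (I : Finset (ℕ × ℕ)) : Finset (Fin n × Fin n) :=
  Finset.univ.filter fun p => ((p.1 : ℕ) + 1, (p.2 : ℕ) + 1) ∈ I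

lemma card_le_card_finPattern {n : ℕ} {I : Finset (ℕ × ℕ)}
    (hI : I ⊆ Finset.Icc 1 n ×ˢ Finset.Icc 1 n) : I.card ≤ (finPattern n I).card := by
  let shift : Fin n × Fin n → ℕ × ℕ := fun p => ((p.1 : ℕ) + 1, (p.2 : ℕ) + 1)
  have hsub : I ⊆ (finPattern n I).image shift := fun p hp => by
    have hp' := hI hp
    simp only [Finset.mem_product, Finset.mem_Icc] at hp'
    let q : Fin n × Fin n := (⟨p.1 - 1, by omega⟩, ⟨p.2 - 1, by omega⟩)
    have hq : shift q = p := Prod.ext (Nat.sub_add_cancel hp'.1.1) (Nat.sub_add_cancel hp'.2.1)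
    exact Finset.mem_image.2
      ⟨q, Finset.mem_filter.2 ⟨Finset.mem_univ q, show shift q ∈ I by rwa [hq]⟩, hq⟩
  exact (Finset.card_le_card hsub).trans Finset.card_image_le

end PatternUniversality

end

open PatternUniversality in
/-- If a proper pattern `I ∈ P_n` is `n`-universal, then `|I| ≤ n(n-1)/2`. -/
theorem proper_universal_card_le (n : ℕ) (I : Finset (ℕ × ℕ))
    (hI : I ⊆ Finset.Icc 1 n ×ˢ Finset.Icc 1 n)
    (hproper : ∃ i ∈ Finset.Icc 1 n, (i, i) ∉ I)
    (huniv : IsUniversal n I) :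
    I.card ≤ n * (n - 1) / 2 := by
  obtain ⟨i, hi, hiI⟩ := hproper
  rw [Finset.mem_Icc] at hi
  have hdiag : (⟨i - 1, by omega⟩, ⟨i - 1, by omega⟩) ∉ finPattern n I := by
    simpa [finPattern, Nat.sub_add_cancel hi.1] using hiI
  refine (card_le_card_finPattern hI).trans
    (card_le_of_forall_exists_unitary_mem_patternSubspace hdiag fun A hA => ?_)
  obtain ⟨U, hU, hzero⟩ := huniv A hA.1
  refine ⟨U, hU, ?_, fun p hp => hzero p.1 p.2 (Finset.mem_filter.1 hp).2⟩
  rw [trace_mul_cycle, mem_unitaryGroup_iff'.1 hU, one_mul]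
  exact hA.1
end

section
/- Let m > n ≥ 1, let I ∈ P_n be a strict n-universal pattern, and let J ∈ P_{m−n} be a strict (m−n)-universal pattern. Then the pattern I' = I ∪ {(n+i, n+j) : (i,j) ∈ J} ∪ ({1,…,n} × {n+1,…,m}) ⊆ {1,…,m}×{1,…,m} is m-universal. -/
open Matrix Module Finset

theorem Module.End.exists_mem_invtSubmodule_finrank_eq {K V : Type*} [Field K] [IsAlgClosed K]
    [AddCommGroup V] [Module K V] [FiniteDimensional K V] (f : Module.End K V) :
    ∀ k ≤ finrank K V, ∃ W ∈ f.invtSubmodule, finrank K W = k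
  | 0, _ => ⟨⊥, Module.End.invtSubmodule.bot_mem f, finrank_bot K V⟩
  | k + 1, hk => by
    obtain ⟨W, hWf, hW⟩ := exists_mem_invtSubmodule_finrank_eq f k (by omega)
    have : Nontrivial (V ⧸ W) := Module.nontrivial_of_finrank_pos (R := K) <| by
      have := W.finrank_quotient_add_finrank; omega
    -- lift an eigenvector of the induced map on `V ⧸ W` and adjoin it to `W`
    obtain ⟨μ, hμ⟩ := Module.End.exists_eigenvalue (W.mapQ W f hWf)
    obtain ⟨v, hv⟩ := hμ.exists_hasEigenvector
    obtain ⟨u, rfl⟩ := Submodule.Quotient.mk_surjective W v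
    have hu : u ∉ W := by simpa [Submodule.Quotient.mk_eq_zero] using hv.2
    have hu₀ : u ≠ 0 := by rintro rfl; exact hu W.zero_mem
    have hfu : f u - μ • u ∈ W := by
      rw [← Submodule.Quotient.eq, Submodule.Quotient.mk_smul, ← hv.apply_eq_smul]
      rfl
    refine ⟨W ⊔ K ∙ u, fun x hx => ?_, ?_⟩
    · obtain ⟨w, hw, y, hy, rfl⟩ := Submodule.mem_sup.mp hx
      obtain ⟨c, rfl⟩ := Submodule.mem_span_singleton.mp hy
      have hf : f (w + c • u) = (f w + c • (f u - μ • u)) + (c * μ) • u := by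
        rw [map_add, map_smul, smul_sub, smul_smul]; abel
      rw [Submodule.mem_comap, hf]
      exact Submodule.add_mem_sup (W.add_mem (hWf hw) (W.smul_mem c hfu))
        (Submodule.smul_mem _ _ (Submodule.mem_span_singleton_self u))
    · have hdisj : W ⊓ (K ∙ u) = ⊥ := ((Submodule.disjoint_span_singleton' hu₀).mpr hu).eq_bot
      have := Submodule.finrank_sup_add_finrank_inf_eq W (K ∙ u)
      rw [hdisj, finrank_bot, finrank_span_singleton hu₀] at this
      omega

theorem Submodule.exists_orthonormalBasis_subordinate {𝕜 E ι : Type*} [RCLike 𝕜]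
    [NormedAddCommGroup E] [InnerProductSpace 𝕜 E] [FiniteDimensional 𝕜 E] [Fintype ι]
    (K : Submodule 𝕜 E) (p : ι → Prop) [DecidablePred p]
    (hι : Fintype.card ι = finrank 𝕜 E) (hp : Fintype.card {i // p i} = finrank 𝕜 K) :
    ∃ v : OrthonormalBasis ι 𝕜 E, ∀ i, (p i → v i ∈ K) ∧ (¬p i → v i ∈ Kᗮ) := by
  have hp' : Fintype.card {i // ¬p i} = finrank 𝕜 Kᗮ := by
    rw [Fintype.card_subtype_compl, hι, hp, ← K.finrank_add_finrank_orthogonal,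
      Nat.add_sub_cancel_left]
  let v₁ := (stdOrthonormalBasis 𝕜 K).reindex (Fintype.equivFinOfCardEq hp).symm
  let v₂ := (stdOrthonormalBasis 𝕜 Kᗮ).reindex (Fintype.equivFinOfCardEq hp').symm
  refine ⟨((v₁.prod v₂).map K.orthogonalDecomposition.symm).reindex (Equiv.sumCompl p),
    fun i => ⟨fun hi => ?_, fun hi => ?_⟩⟩
  · simp [Equiv.sumCompl_symm_apply_of_pos hi]
  · simp [Equiv.sumCompl_symm_apply_of_neg hi]

theorem OrthonormalBasis.exists_unitary_conj_apply_eq_inner {𝕜 ι : Type*} [RCLike 𝕜]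
    [Fintype ι] [DecidableEq ι] (b : OrthonormalBasis ι 𝕜 (EuclideanSpace 𝕜 ι))
    (A : Matrix ι ι 𝕜) :
    ∃ U ∈ unitaryGroup ι 𝕜, ∀ i j,
      (U * A * star U) i j = inner 𝕜 (b i) (toEuclideanLin A (b j)) := by
  let P := (EuclideanSpace.basisFun ι 𝕜).toBasis.toMatrix b.toBasis
  refine ⟨star P, Unitary.star_mem
    ((EuclideanSpace.basisFun ι 𝕜).toMatrix_orthonormalBasis_mem_unitary b), fun i j => ?_⟩
  rw [star_star, EuclideanSpace.inner_eq_star_dotProduct, toLpLin_apply, dotProduct_comm,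
    dotProduct_mulVec, Matrix.mul_apply]
  rfl

theorem Matrix.exists_unitary_conj_blockTriangular_bool {ι : Type*} [Fintype ι] [DecidableEq ι]
    (A : Matrix ι ι ℂ) (b : ι → Bool) :
    ∃ U ∈ unitaryGroup ι ℂ, (U * A * star U).BlockTriangular b := by
  obtain ⟨W, hWA, hW⟩ := Module.End.exists_mem_invtSubmodule_finrank_eq (toEuclideanLin A)
    (Fintype.card {i // b i = false})
    (by rw [finrank_euclideanSpace]; exact Fintype.card_subtype_le _)
  obtain ⟨v, hv⟩ := W.exists_orthonormalBasis_subordinate (fun i => b i = false)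
    finrank_euclideanSpace.symm hW.symm
  obtain ⟨U, hU, hUA⟩ := v.exists_unitary_conj_apply_eq_inner A
  refine ⟨U, hU, fun i j hij => ?_⟩
  obtain ⟨hj, hi⟩ := Bool.lt_iff.mp hij
  rw [hUA]
  exact Submodule.inner_left_of_mem_orthogonal (hWA (x := v j) ((hv j).1 hj))
    ((hv i).2 (by simp [hi]))

section UnitaryGroup

variable {ι κ α : Type*} [Fintype ι] [Fintype κ] [CommRing α] [StarRing α]

theorem Matrix.fromBlocks_mem_unitaryGroup [DecidableEq ι] [DecidableEq κ]
    {A : Matrix ι ι α} {D : Matrix κ κ α} (hA : A ∈ unitaryGroup ι α) (hD : D ∈ unitaryGroup κ α) :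
    fromBlocks A 0 0 D ∈ unitaryGroup (ι ⊕ κ) α := by
  rw [mem_unitaryGroup_iff, star_eq_conjTranspose, fromBlocks_conjTranspose, fromBlocks_multiply]
  simp [← star_eq_conjTranspose, mem_unitaryGroup_iff.mp hA, mem_unitaryGroup_iff.mp hD]

theorem Matrix.submatrix_equiv_mem_unitaryGroup [DecidableEq ι] [DecidableEq κ]
    {U : Matrix ι ι α} (hU : U ∈ unitaryGroup ι α) (e : κ ≃ ι) :
    U.submatrix e e ∈ unitaryGroup κ α := by
  rw [mem_unitaryGroup_iff, star_eq_conjTranspose, conjTranspose_submatrix, submatrix_mul_equiv,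
    ← star_eq_conjTranspose, mem_unitaryGroup_iff.mp hU, submatrix_one_equiv]

theorem Matrix.submatrix_mul_mul_star_equiv (U A : Matrix ι ι α) (e : κ ≃ ι) :
    U.submatrix e e * A.submatrix e e * star (U.submatrix e e) =
      (U * A * star U).submatrix e e := by
  rw [star_eq_conjTranspose, conjTranspose_submatrix, submatrix_mul_equiv, submatrix_mul_equiv,
    ← star_eq_conjTranspose]

end UnitaryGroup

theorem Matrix.exists_unitary_conj_eq_fromBlocks {ι κ : Type*} [Fintype ι] [Fintype κ]
    [DecidableEq ι] [DecidableEq κ] {S₁ : Set (Matrix ι ι ℂ)} {S₂ : Set (Matrix κ κ ℂ)}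
    (h₁ : ∀ X, ∃ V ∈ unitaryGroup ι ℂ, V * X * star V ∈ S₁)
    (h₂ : ∀ Z, ∃ W ∈ unitaryGroup κ ℂ, W * Z * star W ∈ S₂) (A : Matrix (ι ⊕ κ) (ι ⊕ κ) ℂ) :
    ∃ U ∈ unitaryGroup (ι ⊕ κ) ℂ, ∃ P ∈ S₁, ∃ Q, ∃ R ∈ S₂, U * A * star U = fromBlocks P 0 Q R := by
  obtain ⟨U₀, hU₀, hB⟩ := exists_unitary_conj_blockTriangular_bool A Sum.isLeft
  set B := U₀ * A * star U₀
  obtain ⟨V, hV, hVX⟩ := h₁ B.toBlocks₁₁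
  obtain ⟨W, hW, hWZ⟩ := h₂ B.toBlocks₂₂
  have hB₁₂ : B.toBlocks₁₂ = 0 := by ext i j; exact hB (by simp)
  refine ⟨fromBlocks V 0 0 W * U₀, mul_mem (fromBlocks_mem_unitaryGroup hV hW) hU₀, _, hVX,
    W * B.toBlocks₂₁ * star V, _, hWZ, ?_⟩
  calc fromBlocks V 0 0 W * U₀ * A * star (fromBlocks V 0 0 W * U₀)
      = fromBlocks V 0 0 W * B * star (fromBlocks V 0 0 W) := by
        simp only [B, star_mul, Matrix.mul_assoc]
    _ = _ := by
        rw [← fromBlocks_toBlocks B, hB₁₂]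
        simp [fromBlocks_multiply, star_eq_conjTranspose, fromBlocks_conjTranspose,
          Matrix.mul_assoc]

def Matrix.VanishesOn {α : Type*} [Zero α] {n : ℕ} (B : Matrix (Fin n) (Fin n) α)
    (I : Finset (ℕ × ℕ)) : Prop :=
  ∀ i j : Fin n, ((i : ℕ) + 1, (j : ℕ) + 1) ∈ I → B i j = 0

theorem IsUniversal.exists_unitary_conj_vanishesOn {n : ℕ} {I : Finset (ℕ × ℕ)}
    (hI : IsUniversal n I) (hIstrict : ∀ p ∈ I, p.1 ≠ p.2) (A : Matrix (Fin n) (Fin n) ℂ) :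
    ∃ U ∈ unitaryGroup (Fin n) ℂ, (U * A * star U).VanishesOn I := by
  obtain rfl | hn := eq_or_ne n 0
  · exact ⟨1, one_mem _, fun i => i.elim0⟩
  set c := A.trace / n
  obtain ⟨U, hU, hUA⟩ := hI (A - c • 1) (by simp [trace_sub, c, hn])
  have hconj : U * (A - c • 1) * star U = U * A * star U - c • 1 := by
    rw [mul_sub, sub_mul, mul_smul_comm, mul_one, smul_mul_assoc, mem_unitaryGroup_iff.mp hU]
  refine ⟨U, hU, fun i j hij => ?_⟩
  have hne : i ≠ j := fun h => hIstrict _ hij (by rw [h])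
  simpa [hconj, one_apply_ne hne] using hUA i j hij

theorem Matrix.vanishesOn_submatrix_fromBlocks {α : Type*} [Zero α] {n k : ℕ}
    {I J : Finset (ℕ × ℕ)} (hI : I ⊆ Icc 1 n ×ˢ Icc 1 n) (hJ : J ⊆ Icc 1 k ×ˢ Icc 1 k)
    {P : Matrix (Fin n) (Fin n) α} {Q : Matrix (Fin k) (Fin n) α} {R : Matrix (Fin k) (Fin k) α}
    (hP : P.VanishesOn I) (hR : R.VanishesOn J) :
    ((fromBlocks P 0 Q R).submatrix finSumFinEquiv.symm finSumFinEquiv.symm).VanishesOn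
      (I ∪ J.image (fun p => (n + p.1, n + p.2)) ∪ Icc 1 n ×ˢ Icc (n + 1) (n + k)) := by
  have hI' {a b : ℕ} (h : (a, b) ∈ I) : a ≤ n ∧ b ≤ n := by
    have := hI h; simp only [mem_product, mem_Icc] at this; omega
  have hJ' {a b : ℕ} (h : (a, b) ∈ J) : 1 ≤ a ∧ 1 ≤ b := by
    have := hJ h; simp only [mem_product, mem_Icc] at this; omega
  intro i j hij
  obtain ⟨x, rfl⟩ := finSumFinEquiv.surjective i
  obtain ⟨y, rfl⟩ := finSumFinEquiv.surjective j
  rw [submatrix_apply, Equiv.symm_apply_apply, Equiv.symm_apply_apply]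
  simp only [mem_union, mem_image, mem_product, mem_Icc, Prod.mk.injEq, Prod.exists] at hij
  rcases x with p | p <;> rcases y with q | q <;>
    simp only [fromBlocks_apply₁₁, fromBlocks_apply₁₂, fromBlocks_apply₂₁, fromBlocks_apply₂₂,
      zero_apply, finSumFinEquiv_apply_left, finSumFinEquiv_apply_right, Fin.val_castAdd,
      Fin.val_natAdd] at hij ⊢
  · rcases hij with (h | ⟨a, b, hab, ha, -⟩) | h
    · exact hP p q h
    · have := hJ' hab; omega
    · omega
  · rcases hij with (h | ⟨a, b, hab, -, hb⟩) | h
    · have := hI' h; omega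
    · have := hJ' hab; omega
    · omega
  · rcases hij with (h | ⟨a, b, hab, ha, hb⟩) | h
    · have := hI' h; omega
    · obtain rfl : a = p + 1 := by omega
      obtain rfl : b = q + 1 := by omega
      exact hR p q hab
    · omega

theorem universal_extension_general (n m : ℕ) (hnm : n < m)
    (I J : Finset (ℕ × ℕ))
    (hI : I ⊆ Finset.Icc 1 n ×ˢ Finset.Icc 1 n)
    (hIstrict : ∀ p ∈ I, p.1 ≠ p.2)
    (hJ : J ⊆ Finset.Icc 1 (m - n) ×ˢ Finset.Icc 1 (m - n))
    (hJstrict : ∀ p ∈ J, p.1 ≠ p.2)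
    (hIuniv : IsUniversal n I) (hJuniv : IsUniversal (m - n) J) :
    IsUniversal m
      (I ∪ J.image (fun p => (n + p.1, n + p.2)) ∪ Finset.Icc 1 n ×ˢ Finset.Icc (n + 1) m) := by
  obtain ⟨k, rfl⟩ := Nat.exists_eq_add_of_le hnm.le
  rw [Nat.add_sub_cancel_left] at hJ hJuniv
  intro A _
  let e : Fin n ⊕ Fin k ≃ Fin (n + k) := finSumFinEquiv
  obtain ⟨U, hU, P, hP, Q, R, hR, hUA⟩ := exists_unitary_conj_eq_fromBlocks
    (S₁ := {P | P.VanishesOn I}) (S₂ := {R | R.VanishesOn J})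
    (hIuniv.exists_unitary_conj_vanishesOn hIstrict)
    (hJuniv.exists_unitary_conj_vanishesOn hJstrict) (A.submatrix e e)
  refine ⟨U.submatrix e.symm e.symm, submatrix_equiv_mem_unitaryGroup hU e.symm, ?_⟩
  have hA : A = (A.submatrix e e).submatrix e.symm e.symm := by simp
  rw [hA, submatrix_mul_mul_star_equiv, hUA]
  exact vanishesOn_submatrix_fromBlocks hI hJ hP hR

/-- If `I ∈ P_n` and `J ∈ P_{m-n}` are strict universal patterns, then
`I' = I ∪ ((n,n) + J) ∪ ({1,…,n} × {n+1,…,m})` is `m`-universal. -/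
theorem universal_extension (n m : ℕ) (hn : 1 ≤ n) (hnm : n < m)
    (I J : Finset (ℕ × ℕ))
    (hI : I ⊆ Finset.Icc 1 n ×ˢ Finset.Icc 1 n)
    (hIstrict : ∀ p ∈ I, p.1 ≠ p.2)
    (hJ : J ⊆ Finset.Icc 1 (m - n) ×ˢ Finset.Icc 1 (m - n))
    (hJstrict : ∀ p ∈ J, p.1 ≠ p.2)
    (hIuniv : IsUniversal n I) (hJuniv : IsUniversal (m - n) J) :
    IsUniversal m
      (I ∪ J.image (fun p => (n + p.1, n + p.2)) ∪ Finset.Icc 1 n ×ˢ Finset.Icc (n + 1) m) :=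
  universal_extension_general n m hnm I J hI hIstrict hJ hJstrict hIuniv hJuniv
end

section
/- Let I ∈ P_3 be a pattern of size 3 which contains at least one diagonal position (i,i) but does not contain all three diagonal positions (1,1),(2,2),(3,3). Then I is not 3-universal: there exists a traceless complex 3×3 matrix A that is not unitarily similar to any matrix X with x_{ij} = 0 for all (i,j) ∈ I. -/
open Complex Matrix Finset ComplexConjugate

noncomputable def witnessSpectrum : Fin 3 → ℂ := ![2, -1 + I, -1 - I]

theorem sum_witnessSpectrum : ∑ k, witnessSpectrum k = 0 := by
  simp only [witnessSpectrum, Fin.sum_univ_three, cons_val_zero, cons_val_one, Matrix.cons_val]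
  ring

noncomputable def uniformWeights : Fin 3 → ℝ := fun _ => 1 / 3

noncomputable def tiltedWeights : Fin 3 → ℝ := ![1 / 6, 5 / 12, 5 / 12]

theorem eq_uniform_of_sum_witnessSpectrum_mul_eq_zero {p : Fin 3 → ℝ} (hp : ∑ k, p k = 1)
    (h : ∑ k, witnessSpectrum k * p k = 0) : p = uniformWeights := by
  simp only [Fin.sum_univ_three] at hp
  have hre : 2 * p 0 - p 1 - p 2 = 0 := by
    simpa [witnessSpectrum, Fin.sum_univ_three, sub_eq_add_neg] using congrArg re h
  have him : p 1 - p 2 = 0 := by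
    simpa [witnessSpectrum, Fin.sum_univ_three, sub_eq_add_neg] using congrArg im h
  funext k
  fin_cases k <;> simp only [uniformWeights, Fin.zero_eta, Fin.mk_one, Fin.reduceFinMk] <;> linarith

theorem witnessSpectrum_kernel {c : Fin 3 → ℂ} (h₁ : ∑ k, c k = 0)
    (h₂ : ∑ k, witnessSpectrum k * c k = 0) :
    5 * c 0 = (-1 + 3 * I) * c 2 ∧ 5 * c 1 = -(4 + 3 * I) * c 2 := by
  -- `c` is proportional to `(λ₁ - λ₂, λ₂ - λ₀, λ₀ - λ₁) = (2i, -3 - i, 3 - i)`.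
  simp only [witnessSpectrum, Fin.sum_univ_three, cons_val_zero, cons_val_one,
    Matrix.cons_val] at h₁ h₂
  constructor
  · linear_combination (3 + I) / 2 * (h₂ - (-1 + I) * h₁) + (c 2 + c 0 / 2) * I_sq
  · linear_combination 5 * h₁ - (3 + I) / 2 * (h₂ - (-1 + I) * h₁) - (c 2 + c 0 / 2) * I_sq

theorem normSq_witnessSpectrum_kernel {c : Fin 3 → ℂ} (h₁ : ∑ k, c k = 0)
    (h₂ : ∑ k, witnessSpectrum k * c k = 0) :
    5 * normSq (c 0) = 2 * normSq (c 2) ∧ normSq (c 1) = normSq (c 2) := by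
  obtain ⟨e₀, e₁⟩ := witnessSpectrum_kernel h₁ h₂
  have n₀ := congrArg normSq e₀
  have n₁ := congrArg normSq e₁
  have five : normSq 5 = 25 := by norm_num [normSq_apply]
  have ten : normSq (-1 + 3 * I) = 10 := by norm_num [normSq_apply]
  have twentyfive : normSq (-(4 + 3 * I)) = 25 := by norm_num [normSq_apply]
  rw [normSq_mul, normSq_mul, five, ten] at n₀
  rw [normSq_mul, normSq_mul, five, twentyfive] at n₁
  constructor <;> linarith

theorem eq_zero_of_witnessSpectrum_kernel {c : Fin 3 → ℂ} (h₁ : ∑ k, c k = 0)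
    (h₂ : ∑ k, witnessSpectrum k * c k = 0) (h₁' : ∑ k, conj (c k) = 0)
    (h₂' : ∑ k, witnessSpectrum k * conj (c k) = 0) : c = 0 := by
  obtain ⟨e₀, e₁⟩ := witnessSpectrum_kernel h₁ h₂
  have e₀' := congrArg conj (witnessSpectrum_kernel h₁' h₂').1
  simp only [map_mul, map_add, map_neg, map_one, map_ofNat, conj_I, conj_conj] at e₀'
  have hc₂ : c 2 = 0 := by
    have : 6 * I * c 2 = 0 := by linear_combination e₀' - e₀
    simpa [I_ne_zero] using this
  funext k
  fin_cases k
  · simpa [hc₂] using e₀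
  · simpa [hc₂] using e₁
  · exact hc₂

/-- The relation that a zero entry `X i j`, `i ≠ j`, imposes on the weights of rows `i`
and `j`. -/
def Linked (p q : Fin 3 → ℝ) : Prop :=
  5 * (p 0 * q 0) = 2 * (p 2 * q 2) ∧ p 1 * q 1 = p 2 * q 2

namespace Linked

variable {p q r : Fin 3 → ℝ}

theorem symm (h : Linked p q) : Linked q p :=
  ⟨by linarith [h.1], by linarith [h.2]⟩

theorem eq_tilted (h : Linked p q) (hp : p = uniformWeights) (hq : ∑ k, q k = 1) :
    q = tiltedWeights := by
  subst hp
  simp only [Linked, uniformWeights] at h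
  simp only [Fin.sum_univ_three] at hq
  funext k
  fin_cases k <;>
    simp only [tiltedWeights, Fin.zero_eta, Fin.mk_one, Fin.reduceFinMk, cons_val_zero,
      cons_val_one, Matrix.cons_val] <;>
    linarith [h.1, h.2]

theorem eq_uniform (h : Linked p q) (hp : p = tiltedWeights) (hq : ∑ k, q k = 1) :
    q = uniformWeights := by
  subst hp
  norm_num [Linked, tiltedWeights, cons_val_two, vecHead, vecTail] at h
  simp only [Fin.sum_univ_three] at hq
  funext k
  fin_cases k <;> simp only [uniformWeights, Fin.zero_eta, Fin.mk_one, Fin.reduceFinMk] <;>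
    linarith [h.1, h.2]

theorem not_uniform_uniform : ¬ Linked uniformWeights uniformWeights := by
  norm_num [Linked, uniformWeights]

theorem false_of_chain (hpq : Linked p q) (hqr : Linked q r) (hp : ∑ k, p k = 1)
    (hq : ∑ k, q k = 1) (hr : ∑ k, r k = 1) (hcol : p 0 + q 0 + r 0 = 1)
    (hu : p = uniformWeights ∨ q = uniformWeights ∨ r = uniformWeights) : False := by
  rcases hu with hu | hu | hu
  · have hq' := hpq.eq_tilted hu hq
    have hr' := hqr.eq_uniform hq' hr
    subst hu hq' hr'
    norm_num [uniformWeights, tiltedWeights] at hcol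
  · have hp' := hpq.symm.eq_tilted hu hp
    have hr' := hqr.eq_tilted hu hr
    subst hu hp' hr'
    norm_num [uniformWeights, tiltedWeights] at hcol
  · have hq' := hqr.symm.eq_tilted hu hq
    have hp' := hpq.symm.eq_uniform hq' hp
    subst hu hq' hp'
    norm_num [uniformWeights, tiltedWeights] at hcol

end Linked

theorem false_of_uniform_of_disjoint {p q : Fin 3 → ℝ} (hp : p = uniformWeights)
    (hpq : ∀ k, p k * q k = 0) (hq : ∑ k, q k = 1) : False := by
  subst hp
  simp only [uniformWeights, Fin.sum_univ_three] at hpq hq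
  linarith [hpq 0, hpq 1, hpq 2]

theorem false_of_disjoint_of_add_uniform {p q r : Fin 3 → ℝ} (hr : r = uniformWeights)
    (hpq : ∀ k, p k * q k = 0) (hcol : ∀ k, p k + q k + r k = 1) (hp : ∑ k, p k = 1) :
    False := by
  subst hr
  simp only [uniformWeights] at hcol
  have two_thirds : ∀ k, p k = 0 ∨ p k = 2 / 3 := fun k => by
    rcases mul_eq_zero.mp (hpq k) with h | h
    · exact .inl h
    · exact .inr (by linarith [hcol k])
  simp only [Fin.sum_univ_three] at hp
  rcases two_thirds 0 with h₀ | h₀ <;> rcases two_thirds 1 with h₁ | h₁ <;>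
    rcases two_thirds 2 with h₂ | h₂ <;> linarith

section Unitary

variable {n : Type*} [Fintype n] [DecidableEq n] {U : Matrix n n ℂ}

theorem mul_diagonal_mul_star_apply (U : Matrix n n ℂ) (d : n → ℂ) (i j : n) :
    (U * diagonal d * star U) i j = ∑ k, d k * (U i k * conj (U j k)) := by
  simp only [mul_apply, diagonal_apply, star_apply, RCLike.star_def, mul_ite, mul_zero,
    sum_ite_eq', mem_univ, if_true]
  exact sum_congr rfl fun k _ => by ring

theorem sum_mul_conj_eq (hU : U ∈ unitaryGroup n ℂ) (i j : n) :
    ∑ k, U i k * conj (U j k) = if i = j then 1 else 0 := by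
  simpa [mul_apply, one_apply, star_apply] using
    congrFun (congrFun (mem_unitaryGroup_iff.mp hU) i) j

noncomputable def rowWeights (U : Matrix n n ℂ) (i : n) : n → ℝ := fun k => normSq (U i k)

theorem sum_rowWeights (hU : U ∈ unitaryGroup n ℂ) (i : n) : ∑ k, rowWeights U i k = 1 := by
  have h := sum_mul_conj_eq hU i i
  rw [if_pos rfl] at h
  simp only [mul_conj] at h
  exact_mod_cast h

theorem sum_rowWeights_apply (hU : U ∈ unitaryGroup n ℂ) (k : n) :
    ∑ i, rowWeights U i k = 1 := by
  have h := congrFun (congrFun (mem_unitaryGroup_iff'.mp hU) k) k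
  simp only [mul_apply, one_apply_eq, star_apply, RCLike.star_def,
    ← normSq_eq_conj_mul_self] at h
  exact_mod_cast h

end Unitary

theorem univ_eq_of_pairwise_ne {x y z : Fin 3} (hxy : x ≠ y) (hxz : x ≠ z) (hyz : y ≠ z) :
    (univ : Finset (Fin 3)) = {x, y, z} := by
  revert x y z; decide

theorem exists_ne_ne_of_ne {x y : Fin 3} (hxy : x ≠ y) : ∃ z, x ≠ z ∧ y ≠ z := by
  revert x y; decide

theorem exists_chain_of_ne {a b c d : Fin 3} (hab : a ≠ b) (hcd : c ≠ d) (h₁ : (c, d) ≠ (a, b))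
    (h₂ : (c, d) ≠ (b, a)) : ∃ x y z : Fin 3, x ≠ y ∧ x ≠ z ∧ y ≠ z ∧
      ((a, b) = (x, y) ∨ (a, b) = (y, x)) ∧ ((c, d) = (y, z) ∨ (c, d) = (z, y)) := by
  revert a b c d; decide

noncomputable def witnessMatrix : Matrix (Fin 3) (Fin 3) ℂ := diagonal witnessSpectrum

theorem trace_witnessMatrix : witnessMatrix.trace = 0 := by
  rw [witnessMatrix, trace_diagonal, sum_witnessSpectrum]

section Witness

variable {U : Matrix (Fin 3) (Fin 3) ℂ}

theorem rowWeights_add_add (hU : U ∈ unitaryGroup (Fin 3) ℂ) {x y z : Fin 3} (hxy : x ≠ y)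
    (hxz : x ≠ z) (hyz : y ≠ z) (k : Fin 3) :
    rowWeights U x k + rowWeights U y k + rowWeights U z k = 1 := by
  rw [← sum_rowWeights_apply hU k, univ_eq_of_pairwise_ne hxy hxz hyz,
    sum_insert (by simp [hxy, hxz]), sum_pair hyz, add_assoc]

theorem rowWeights_eq_uniform (hU : U ∈ unitaryGroup (Fin 3) ℂ) {m : Fin 3}
    (h : (U * witnessMatrix * star U) m m = 0) : rowWeights U m = uniformWeights := by
  refine eq_uniform_of_sum_witnessSpectrum_mul_eq_zero (sum_rowWeights hU m) ?_
  rw [witnessMatrix, mul_diagonal_mul_star_apply] at h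
  simpa [rowWeights, mul_conj] using h

theorem linked_rowWeights (hU : U ∈ unitaryGroup (Fin 3) ℂ) {i j : Fin 3} (hij : i ≠ j)
    (h : (U * witnessMatrix * star U) i j = 0) : Linked (rowWeights U i) (rowWeights U j) := by
  rw [witnessMatrix, mul_diagonal_mul_star_apply] at h
  have := normSq_witnessSpectrum_kernel (c := fun k => U i k * conj (U j k))
    (by simpa [hij] using sum_mul_conj_eq hU i j) h
  simpa [Linked, rowWeights, normSq_mul] using this

theorem rowWeights_mul_eq_zero (hU : U ∈ unitaryGroup (Fin 3) ℂ) {i j : Fin 3} (hij : i ≠ j)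
    (h : (U * witnessMatrix * star U) i j = 0) (h' : (U * witnessMatrix * star U) j i = 0)
    (k : Fin 3) : rowWeights U i k * rowWeights U j k = 0 := by
  rw [witnessMatrix, mul_diagonal_mul_star_apply] at h h'
  have hc := eq_zero_of_witnessSpectrum_kernel (c := fun k => U i k * conj (U j k))
    (by simpa [hij] using sum_mul_conj_eq hU i j) h
    (by simpa [mul_comm, Ne.symm hij] using sum_mul_conj_eq hU j i)
    (by simpa [mul_comm, mul_left_comm] using h')
  simpa [rowWeights, normSq_mul] using congrArg normSq (congrFun hc k)

theorem false_of_two_diagonal_zeros (hU : U ∈ unitaryGroup (Fin 3) ℂ) {m d i j : Fin 3}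
    (hmd : m ≠ d) (hij : i ≠ j) (hm : (U * witnessMatrix * star U) m m = 0)
    (hd : (U * witnessMatrix * star U) d d = 0) (h : (U * witnessMatrix * star U) i j = 0) :
    False := by
  obtain ⟨e, hme, hde⟩ := exists_ne_ne_of_ne hmd
  have hum := rowWeights_eq_uniform hU hm
  have hud := rowWeights_eq_uniform hU hd
  have hue : rowWeights U e = uniformWeights := funext fun k => by
    have hcol := rowWeights_add_add hU hmd hme hde k
    rw [hum, hud] at hcol
    simp only [uniformWeights] at hcol ⊢
    linarith
  have hall : ∀ w, rowWeights U w = uniformWeights := fun w => by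
    have hw := mem_univ w
    rw [univ_eq_of_pairwise_ne hmd hme hde] at hw
    simp only [mem_insert, mem_singleton] at hw
    rcases hw with rfl | rfl | rfl <;> assumption
  exact Linked.not_uniform_uniform (by simpa only [hall] using linked_rowWeights hU hij h)

theorem false_of_swapped_zeros (hU : U ∈ unitaryGroup (Fin 3) ℂ) {m a b : Fin 3} (hab : a ≠ b)
    (hm : (U * witnessMatrix * star U) m m = 0) (h : (U * witnessMatrix * star U) a b = 0)
    (h' : (U * witnessMatrix * star U) b a = 0) : False := by
  have hu := rowWeights_eq_uniform hU hm
  have hdisj := rowWeights_mul_eq_zero hU hab h h'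
  by_cases hma : m = a
  · subst hma
    exact false_of_uniform_of_disjoint hu hdisj (sum_rowWeights hU b)
  by_cases hmb : m = b
  · subst hmb
    exact false_of_uniform_of_disjoint hu (fun k => by rw [mul_comm]; exact hdisj k)
      (sum_rowWeights hU a)
  exact false_of_disjoint_of_add_uniform hu hdisj
    (rowWeights_add_add hU hab (Ne.symm hma) (Ne.symm hmb)) (sum_rowWeights hU a)

theorem linked_rowWeights_of_or (hU : U ∈ unitaryGroup (Fin 3) ℂ) {i j : Fin 3} (hij : i ≠ j)
    (h : (U * witnessMatrix * star U) i j = 0 ∨ (U * witnessMatrix * star U) j i = 0) :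
    Linked (rowWeights U i) (rowWeights U j) :=
  h.elim (linked_rowWeights hU hij) fun h => (linked_rowWeights hU hij.symm h).symm

theorem false_of_chain_zeros (hU : U ∈ unitaryGroup (Fin 3) ℂ) {m x y z : Fin 3} (hxy : x ≠ y)
    (hxz : x ≠ z) (hyz : y ≠ z) (hm : (U * witnessMatrix * star U) m m = 0)
    (h₁ : (U * witnessMatrix * star U) x y = 0 ∨ (U * witnessMatrix * star U) y x = 0)
    (h₂ : (U * witnessMatrix * star U) y z = 0 ∨ (U * witnessMatrix * star U) z y = 0) :
    False := by
  have hmem := mem_univ m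
  rw [univ_eq_of_pairwise_ne hxy hxz hyz] at hmem
  simp only [mem_insert, mem_singleton] at hmem
  refine (linked_rowWeights_of_or hU hxy h₁).false_of_chain (linked_rowWeights_of_or hU hyz h₂)
    (sum_rowWeights hU x) (sum_rowWeights hU y) (sum_rowWeights hU z)
    (rowWeights_add_add hU hxy hxz hyz 0) ?_
  rcases hmem with rfl | rfl | rfl <;> simp [rowWeights_eq_uniform hU hm]

theorem false_of_three_zeros (hU : U ∈ unitaryGroup (Fin 3) ℂ) {m a b : Fin 3}
    {r : Fin 3 × Fin 3} (hab : a ≠ b) (hrm : r ≠ (m, m)) (hrab : r ≠ (a, b))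
    (hm : (U * witnessMatrix * star U) m m = 0) (h : (U * witnessMatrix * star U) a b = 0)
    (hr : (U * witnessMatrix * star U) r.1 r.2 = 0) : False := by
  obtain ⟨c, d⟩ := r
  by_cases hcd : c = d
  · subst hcd
    exact false_of_two_diagonal_zeros hU (fun hmc => hrm (by rw [hmc])) hab hm hr h
  by_cases hswap : (c, d) = (b, a)
  · obtain ⟨rfl, rfl⟩ := Prod.mk.inj hswap
    exact false_of_swapped_zeros hU hab hm h hr
  obtain ⟨x, y, z, hxy, hxz, hyz, h₁, h₂⟩ := exists_chain_of_ne hab hcd hrab hswap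
  refine false_of_chain_zeros hU hxy hxz hyz hm ?_ ?_
  · rcases h₁ with h₁ | h₁ <;> obtain ⟨rfl, rfl⟩ := Prod.mk.inj h₁
    exacts [.inl h, .inr h]
  · rcases h₂ with h₂ | h₂ <;> obtain ⟨rfl, rfl⟩ := Prod.mk.inj h₂
    exacts [.inl hr, .inr hr]

end Witness

theorem not_forall_mem_conj_witnessMatrix_eq_zero {U : Matrix (Fin 3) (Fin 3) ℂ}
    (hU : U ∈ unitaryGroup (Fin 3) ℂ) {J : Finset (Fin 3 × Fin 3)} (hcard : J.card = 3)
    (hdiag : ∃ m, (m, m) ∈ J) (hnotall : ¬ ∀ m, (m, m) ∈ J) :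
    ¬ ∀ p ∈ J, (U * witnessMatrix * star U) p.1 p.2 = 0 := by
  intro hzero
  obtain ⟨m, hm⟩ := hdiag
  obtain ⟨⟨a, b⟩, hab_mem, hab⟩ : ∃ p ∈ J, p.1 ≠ p.2 := by
    by_contra! hJ
    have hJdiag : J = univ.diag := eq_of_subset_of_card_le
      (fun p hp => mem_diag.2 ⟨mem_univ _, hJ p hp⟩)
      (by rw [diag_card, card_univ, Fintype.card_fin, hcard])
    exact hnotall fun m => by rw [hJdiag]; exact mem_diag.2 ⟨mem_univ _, rfl⟩
  obtain ⟨r, hr, hrab⟩ := exists_mem_ne (s := J.erase (m, m))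
    (by rw [card_erase_of_mem hm, hcard]; norm_num) (a, b)
  exact false_of_three_zeros hU hab (ne_of_mem_erase hr) hrab (hzero (m, m) hm)
    (hzero (a, b) hab_mem) (hzero r (mem_of_mem_erase hr))

def finPositions (n : ℕ) (I : Finset (ℕ × ℕ)) : Finset (Fin n × Fin n) :=
  univ.filter fun p => ((p.1 : ℕ) + 1, (p.2 : ℕ) + 1) ∈ I

theorem card_finPositions {n : ℕ} {I : Finset (ℕ × ℕ)} (hI : I ⊆ Icc 1 n ×ˢ Icc 1 n) :
    (finPositions n I).card = I.card := by
  refine card_nbij (fun p => ((p.1 : ℕ) + 1, (p.2 : ℕ) + 1)) (fun p hp => (mem_filter.1 hp).2)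
    (fun p _ q _ h => ?_) (fun x hx => ?_)
  · simp only [Prod.mk.injEq, Nat.add_right_cancel_iff, Fin.val_inj] at h
    exact Prod.ext h.1 h.2
  · have hx' := hI hx
    simp only [mem_product, mem_Icc] at hx'
    refine ⟨(⟨x.1 - 1, by omega⟩, ⟨x.2 - 1, by omega⟩), ?_, ?_⟩
    · simpa [finPositions, Nat.sub_add_cancel hx'.1.1, Nat.sub_add_cancel hx'.2.1] using hx
    · ext <;> dsimp only <;> omega

/-- No pattern `I ∈ P_3` of size 3 containing some, but not all, of the diagonal
positions is 3-universal: some traceless `3 × 3` matrix is not unitarily similar to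
any matrix vanishing on the positions of `I`. -/
theorem nonstrict_size_three_not_universal (I : Finset (ℕ × ℕ))
    (hI : I ⊆ Finset.Icc 1 3 ×ˢ Finset.Icc 1 3)
    (hcard : I.card = 3)
    (hdiag : ∃ i ∈ Finset.Icc 1 3, (i, i) ∈ I)
    (hnotall : ¬ ((1, 1) ∈ I ∧ (2, 2) ∈ I ∧ (3, 3) ∈ I)) :
    ∃ A : Matrix (Fin 3) (Fin 3) ℂ, A.trace = 0 ∧
      ¬ ∃ U ∈ Matrix.unitaryGroup (Fin 3) ℂ,
          ∀ i j : Fin 3, ((i : ℕ) + 1, (j : ℕ) + 1) ∈ I → (U * A * star U) i j = 0 := by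
  refine ⟨witnessMatrix, trace_witnessMatrix, ?_⟩
  rintro ⟨U, hU, hzero⟩
  obtain ⟨i, hi, hii⟩ := hdiag
  rw [mem_Icc] at hi
  refine not_forall_mem_conj_witnessMatrix_eq_zero hU (J := finPositions 3 I)
    (by rw [card_finPositions hI, hcard]) ⟨⟨i - 1, by omega⟩, ?_⟩ ?_
    fun p hp => hzero p.1 p.2 (mem_filter.1 hp).2
  · simpa [finPositions, Nat.sub_add_cancel hi.1] using hii
  · intro hall
    exact hnotall ⟨by simpa [finPositions] using hall 0, by simpa [finPositions] using hall 1,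
      by simpa [finPositions] using hall 2⟩
end

section
/- If a pattern I ∈ P_n satisfies χ_I ∉ K(n), then for every m > n one also has χ_I ∉ K(m), where χ_I is viewed as a polynomial in ℝ[x_1,…,x_m]. In other words, every n-nonsingular pattern is m-nonsingular for all m > n. -/
/-!
Setting `x_i = 0` for all `i > n` is a ring endomorphism of `ℝ[x_1, x_2, …]` that fixes `χ_I`
for `I ∈ P_n` and sends `σ_{k,m}` to `σ_{k,n}` (which is `0` for `k > n`). Hence it maps `K(m)`
into `K(n)`, so `χ_I ∈ K(m)` would force `χ_I ∈ K(n)`.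
-/

/-- `χ_I = ∏_{(i,j) ∈ I} (x_i - x_j)`. -/
noncomputable def chiP (I : Finset (ℕ × ℕ)) : MvPolynomial ℕ ℝ :=
  ∏ p ∈ I, (MvPolynomial.X p.1 - MvPolynomial.X p.2)

/-- `χ_n = ∏_{1 ≤ i < j ≤ n} (x_i - x_j)`. -/
noncomputable def chiV (n : ℕ) : MvPolynomial ℕ ℝ :=
  ∏ p ∈ (Finset.Icc 1 n ×ˢ Finset.Icc 1 n).filter (fun p => p.1 < p.2),
    (MvPolynomial.X p.1 - MvPolynomial.X p.2)

/-- The elementary symmetric polynomial `σ_{k,n}` in `x_1, …, x_n`. -/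
noncomputable def sigmaE (n k : ℕ) : MvPolynomial ℕ ℝ :=
  ∑ s ∈ Finset.powersetCard k (Finset.Icc 1 n), ∏ i ∈ s, MvPolynomial.X i

/-- The ideal `K(n)` of `ℝ[x_1, …, x_n]` generated by `σ_{1,n}, …, σ_{n,n}`. -/
noncomputable def Kideal (n : ℕ) : Ideal (MvPolynomial ℕ ℝ) :=
  Ideal.span (sigmaE n '' Set.Icc 1 n)

/-- Inner product for which the monomials form an orthonormal basis:
`⟨f, g⟩ = ∑_d (coeff of x^d in f) * (coeff of x^d in g)`. -/
noncomputable def pinner (f g : MvPolynomial ℕ ℝ) : ℝ :=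
  ∑ d ∈ f.support, f.coeff d * g.coeff d

open MvPolynomial

noncomputable def zeroVarsAbove (n : ℕ) : MvPolynomial ℕ ℝ →ₐ[ℝ] MvPolynomial ℕ ℝ :=
  aeval fun i => if i ≤ n then X i else 0

lemma zeroVarsAbove_X_of_le {n i : ℕ} (h : i ≤ n) : zeroVarsAbove n (X i) = X i := by
  simp [zeroVarsAbove, h]

lemma zeroVarsAbove_X_of_lt {n i : ℕ} (h : n < i) : zeroVarsAbove n (X i) = 0 := by
  simp [zeroVarsAbove, Nat.not_le.mpr h]

lemma zeroVarsAbove_chiP {n : ℕ} {I : Finset (ℕ × ℕ)} (hI : ∀ p ∈ I, p.1 ≤ n ∧ p.2 ≤ n) :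
    zeroVarsAbove n (chiP I) = chiP I := by
  rw [chiP, map_prod]
  refine Finset.prod_congr rfl fun p hp => ?_
  rw [map_sub, zeroVarsAbove_X_of_le (hI p hp).1, zeroVarsAbove_X_of_le (hI p hp).2]

lemma zeroVarsAbove_sigmaE {n m : ℕ} (h : n ≤ m) (k : ℕ) :
    zeroVarsAbove n (sigmaE m k) = sigmaE n k := by
  rw [sigmaE, sigmaE, map_sum,
    ← Finset.sum_subset (Finset.powersetCard_mono (Finset.Icc_subset_Icc_right h))]
  · refine Finset.sum_congr rfl fun s hs => ?_
    rw [map_prod]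
    refine Finset.prod_congr rfl fun i hi => zeroVarsAbove_X_of_le ?_
    exact (Finset.mem_Icc.mp ((Finset.mem_powersetCard.mp hs).1 hi)).2
  · intro s hs hns
    obtain ⟨hsm, hcard⟩ := Finset.mem_powersetCard.mp hs
    obtain ⟨i, hi, hin⟩ : ∃ i ∈ s, n < i := by
      by_contra! hc
      refine hns (Finset.mem_powersetCard.mpr ⟨fun i hi => ?_, hcard⟩)
      exact Finset.mem_Icc.mpr ⟨(Finset.mem_Icc.mp (hsm hi)).1, hc i hi⟩
    rw [map_prod]
    exact Finset.prod_eq_zero hi (zeroVarsAbove_X_of_lt hin)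

lemma sigmaE_eq_zero_of_lt {n k : ℕ} (h : n < k) : sigmaE n k = 0 := by
  rw [sigmaE, Finset.powersetCard_eq_empty.mpr (by simpa using h), Finset.sum_empty]

lemma sigmaE_mem_Kideal {n k : ℕ} (hk : 1 ≤ k) : sigmaE n k ∈ Kideal n := by
  rcases le_or_gt k n with hkn | hnk
  · exact Ideal.subset_span ⟨k, ⟨hk, hkn⟩, rfl⟩
  · rw [sigmaE_eq_zero_of_lt hnk]
    exact (Kideal n).zero_mem

lemma map_zeroVarsAbove_Kideal_le {n m : ℕ} (h : n ≤ m) :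
    (Kideal m).map (zeroVarsAbove n) ≤ Kideal n := by
  rw [Kideal, Ideal.map_span, Ideal.span_le]
  rintro _ ⟨_, ⟨k, ⟨hk, -⟩, rfl⟩, rfl⟩
  rw [zeroVarsAbove_sigmaE h]
  exact sigmaE_mem_Kideal hk

/-- Every `n`-nonsingular pattern is `m`-nonsingular for `m > n`:
if `χ_I ∉ K(n)` then `χ_I ∉ K(m)`. -/
theorem nonsingular_of_le (n m : ℕ) (hnm : n < m) (I : Finset (ℕ × ℕ))
    (hI : I ⊆ Finset.Icc 1 n ×ˢ Finset.Icc 1 n)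
    (h : chiP I ∉ Kideal n) :
    chiP I ∉ Kideal m := by
  intro hm
  have hfix : zeroVarsAbove n (chiP I) = chiP I := by
    refine zeroVarsAbove_chiP fun p hp => ?_
    obtain ⟨h1, h2⟩ := Finset.mem_product.mp (hI hp)
    exact ⟨(Finset.mem_Icc.mp h1).2, (Finset.mem_Icc.mp h2).2⟩
  apply h
  rw [← hfix]
  exact map_zeroVarsAbove_Kideal_le hnm.le (Ideal.mem_map_of_mem _ hm)
end

section
/- Let n ≥ 3 and let I ∈ P'_n have complexity 1. Let {i,j} be the unique 2-element subset of {1,…,n} with both (i,j) ∈ I and (j,i) ∈ I, and let {k,l} be the unique 2-element subset with neither (k,l) nor (l,k) in I. If i, j, k, l are not distinct (i.e., {i,j} ∩ {k,l} ≠ ∅), then ⟨χ_I, χ_n⟩ = ± n!/2, i.e., |⟨χ_I, χ_n⟩| = n!/2; in particular I is n-nonsingular. -/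
/-!
Let `{a, b}` be the doubled pair and `{a, c}` the missing one. Sorting each pair of `I` matches
`I` minus one copy of `(a, b)` with the pairs `i < j` other than `{a, c}`, so
`χ_I = ±(x_a - x_b) P` and `χ_n = (x_a - x_c) P` for one polynomial `P`. The transposition
`(a c)` preserves `⟨·,·⟩`, negates `χ_n` (hence fixes `P`) and carries `(x_c - x_b) P` to
`(x_a - x_b) P`; since `(x_a - x_b) P = χ_n + (x_c - x_b) P`, this gives
`2 ⟨(x_a - x_b) P, χ_n⟩ = ⟨χ_n, χ_n⟩ = n!`, the last value read off the Leibniz expansion of the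
Vandermonde determinant.

`χ_I ∉ K(n)` because `χ_n ⊥ K(n)`: a product `x^v σ_k` is orthogonal to `χ_n` either because it
is invariant under the transposition of two indices where `v` agrees, or, when `v` is injective
on `{1, …, n}`, because all its monomials have degree in `x_1, …, x_n` above `n(n-1)/2`.
-/

open MvPolynomial Finset

lemma pinner_eq_sum_of_support_subset {f g : MvPolynomial ℕ ℝ} {A : Finset (ℕ →₀ ℕ)}
    (hA : f.support ⊆ A) : pinner f g = ∑ d ∈ A, f.coeff d * g.coeff d :=
  sum_subset hA fun d _ hd => by rw [notMem_support_iff.mp hd, zero_mul]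

lemma pinner_add_left (f f' g : MvPolynomial ℕ ℝ) :
    pinner (f + f') g = pinner f g + pinner f' g := by
  classical
  rw [pinner_eq_sum_of_support_subset (support_add (p := f) (q := f')),
    pinner_eq_sum_of_support_subset (subset_union_left (s₂ := f'.support)),
    pinner_eq_sum_of_support_subset (subset_union_right (s₁ := f.support)),
    ← sum_add_distrib]
  simp only [coeff_add, add_mul]

lemma pinner_smul_left (r : ℝ) (f g : MvPolynomial ℕ ℝ) :
    pinner (r • f) g = r * pinner f g := by
  rw [pinner_eq_sum_of_support_subset support_smul, pinner, mul_sum]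
  simp only [coeff_smul, smul_eq_mul, mul_assoc]

lemma pinner_smul_right (r : ℝ) (f g : MvPolynomial ℕ ℝ) :
    pinner f (r • g) = r * pinner f g := by
  simp only [pinner, mul_sum, coeff_smul, smul_eq_mul, mul_left_comm]

lemma pinner_sum_left {α : Type*} (s : Finset α) (f : α → MvPolynomial ℕ ℝ)
    (g : MvPolynomial ℕ ℝ) : pinner (∑ x ∈ s, f x) g = ∑ x ∈ s, pinner (f x) g := by
  classical
  induction s using Finset.induction with
  | empty => simp [pinner]
  | insert _ _ h ih => rw [sum_insert h, sum_insert h, pinner_add_left, ih]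

lemma pinner_monomial_left (d : ℕ →₀ ℕ) (r : ℝ) (g : MvPolynomial ℕ ℝ) :
    pinner (monomial d r) g = r * g.coeff d := by
  classical
  rw [pinner_eq_sum_of_support_subset support_monomial_subset, sum_singleton, coeff_monomial,
    if_pos rfl]

lemma pinner_rename_equiv (τ : ℕ ≃ ℕ) (f g : MvPolynomial ℕ ℝ) :
    pinner (rename τ f) (rename τ g) = pinner f g := by
  classical
  rw [pinner, support_rename_of_injective τ.injective,
    sum_image fun x _ y _ h => Finsupp.mapDomain_injective τ.injective h]
  simp only [coeff_rename_mapDomain _ τ.injective]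
  rfl

lemma pinner_eq_zero_of_rename_eq_neg {τ : ℕ ≃ ℕ} {f g : MvPolynomial ℕ ℝ}
    (hf : rename τ f = f) (hg : rename τ g = -g) : pinner f g = 0 := by
  have h := pinner_rename_equiv τ f g
  rw [hf, hg, ← neg_one_smul ℝ g, pinner_smul_right] at h
  linarith

def increasingPairs (n : ℕ) : Finset (ℕ × ℕ) := (Icc 1 n ×ˢ Icc 1 n).filter fun p => p.1 < p.2

lemma mem_increasingPairs {n : ℕ} {p : ℕ × ℕ} :
    p ∈ increasingPairs n ↔ 1 ≤ p.1 ∧ p.1 < p.2 ∧ p.2 ≤ n := by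
  simp only [increasingPairs, mem_filter, mem_product, mem_Icc]
  omega

lemma chiV_eq_prod_increasingPairs (n : ℕ) :
    chiV n = ∏ p ∈ increasingPairs n, (X p.1 - X p.2 : MvPolynomial ℕ ℝ) := rfl

section Vandermonde

variable {n : ℕ}

noncomputable def succVars (n : ℕ) : Fin n → MvPolynomial ℕ ℝ := fun t => X (t + 1)

/-- The exponent of the monomial `∏ᵢ x_{σ i + 1} ^ i` in the Leibniz expansion of the
Vandermonde determinant. -/
noncomputable def vandermondeExponent (σ : Equiv.Perm (Fin n)) : ℕ →₀ ℕ :=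
  ∑ i, Finsupp.single ((σ i : ℕ) + 1) (i : ℕ)

lemma vandermondeExponent_apply (σ : Equiv.Perm (Fin n)) (a : ℕ) :
    vandermondeExponent σ a = ∑ i, if (σ i : ℕ) + 1 = a then (i : ℕ) else 0 := by
  simp only [vandermondeExponent, Finsupp.finsetSum_apply, Finsupp.single_apply]

lemma vandermondeExponent_apply_succ (σ : Equiv.Perm (Fin n)) (i : Fin n) :
    vandermondeExponent σ ((σ i : ℕ) + 1) = i := by
  rw [vandermondeExponent_apply, sum_eq_single i (fun j _ hj => if_neg ?_) (by simp), if_pos rfl]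
  exact fun h => hj (σ.injective (Fin.ext (by omega)))

lemma vandermondeExponent_injective :
    Function.Injective (vandermondeExponent (n := n)) := by
  intro σ σ' h
  ext i
  have key := vandermondeExponent_apply_succ σ' (σ'.symm (σ i))
  rw [σ'.apply_symm_apply, ← h, vandermondeExponent_apply_succ] at key
  exact congrArg _ (σ'.symm_apply_eq.mp (Fin.val_injective key).symm)

lemma sum_Icc_vandermondeExponent (σ : Equiv.Perm (Fin n)) :
    ∑ a ∈ Icc 1 n, vandermondeExponent σ a = ∑ i ∈ range n, i := by
  simp only [vandermondeExponent_apply]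
  rw [sum_comm, ← Fin.sum_univ_eq_sum_range]
  refine sum_congr rfl fun i _ => ?_
  rw [sum_ite_eq, if_pos (mem_Icc.mpr ⟨by omega, (σ i).2⟩)]

lemma det_vandermonde_succVars :
    (Matrix.vandermonde (succVars n)).det
      = ∑ σ : Equiv.Perm (Fin n), monomial (vandermondeExponent σ) (Equiv.Perm.sign σ : ℝ) := by
  rw [Matrix.det_apply]
  refine sum_congr rfl fun σ _ => ?_
  simp only [Matrix.vandermonde_apply, succVars, X_pow_eq_monomial, ← monomial_sum_one]
  rw [Units.smul_def, ← map_zsmul, zsmul_one]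
  rfl

lemma coeff_det_vandermonde_succVars (d : ℕ →₀ ℕ) :
    coeff d (Matrix.vandermonde (succVars n)).det
      = ∑ σ : Equiv.Perm (Fin n),
          if vandermondeExponent σ = d then (Equiv.Perm.sign σ : ℝ) else 0 := by
  simp only [det_vandermonde_succVars, coeff_sum, coeff_monomial]

lemma coeff_vandermondeExponent_det (σ : Equiv.Perm (Fin n)) :
    coeff (vandermondeExponent σ) (Matrix.vandermonde (succVars n)).det
      = Equiv.Perm.sign σ := by
  rw [coeff_det_vandermonde_succVars, sum_eq_single σ
    (fun τ _ hτ => if_neg fun h => hτ (vandermondeExponent_injective h)) (by simp), if_pos rfl]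

lemma pinner_det_vandermonde_succVars_self :
    pinner (Matrix.vandermonde (succVars n)).det (Matrix.vandermonde (succVars n)).det
      = n.factorial := by
  conv_lhs => arg 1; rw [det_vandermonde_succVars]
  simp only [pinner_sum_left, pinner_monomial_left, coeff_vandermondeExponent_det,
    ← Int.cast_mul, ← Units.val_mul, Int.units_mul_self, Units.val_one, Int.cast_one, sum_const,
    card_univ, Fintype.card_perm, Fintype.card_fin, nsmul_eq_mul, mul_one]

lemma chiV_eq_prod_sigma :
    chiV n = ∏ x ∈ (univ : Finset (Fin n)).sigma (fun i => Ioi i),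
      (X ((x.1 : ℕ) + 1) - X ((x.2 : ℕ) + 1) : MvPolynomial ℕ ℝ) := by
  rw [chiV_eq_prod_increasingPairs]
  refine prod_bij' (fun p hp => ⟨⟨p.1 - 1, by grind [mem_increasingPairs]⟩,
      ⟨p.2 - 1, by grind [mem_increasingPairs]⟩⟩)
    (fun x _ => ((x.1 : ℕ) + 1, (x.2 : ℕ) + 1)) ?_ ?_ ?_ ?_ ?_
  · intro p hp
    rw [mem_increasingPairs] at hp
    simp only [mem_sigma, mem_univ, mem_Ioi, true_and, Fin.lt_def]
    omega
  · intro x _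
    have := x.2.2
    rw [mem_increasingPairs]
    simp only [mem_sigma, mem_Ioi, Fin.lt_def] at *
    omega
  · intro p hp
    rw [mem_increasingPairs] at hp
    ext <;> simp <;> omega
  · intro x _
    ext <;> simp
  · intro p hp
    rw [mem_increasingPairs] at hp
    dsimp only
    congr 2 <;> omega

lemma chiV_eq_neg_one_pow_smul_det :
    ∃ k : ℕ, chiV n = (-1 : ℝ) ^ k • (Matrix.vandermonde (succVars n)).det := by
  refine ⟨#((univ : Finset (Fin n)).sigma fun i => Ioi i), ?_⟩
  rw [Matrix.det_vandermonde, chiV_eq_prod_sigma, ← C_mul', map_pow, ← prod_const, prod_sigma,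
    prod_sigma, ← prod_mul_distrib]
  refine prod_congr rfl fun i _ => ?_
  rw [← prod_mul_distrib]
  refine prod_congr rfl fun j _ => ?_
  simp only [succVars, map_neg, map_one]
  ring

lemma rename_swap_det_vandermonde_succVars {a b : Fin n} (hab : a ≠ b) :
    rename (Equiv.swap ((a : ℕ) + 1) ((b : ℕ) + 1)) (Matrix.vandermonde (succVars n)).det
      = -(Matrix.vandermonde (succVars n)).det := by
  have hswap (t : Fin n) : Equiv.swap ((a : ℕ) + 1) ((b : ℕ) + 1) ((t : ℕ) + 1)
      = (Equiv.swap a b t : ℕ) + 1 := by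
    simp only [Equiv.swap_apply_def, Fin.ext_iff]
    split_ifs <;> omega
  have hrows :
      (Matrix.vandermonde (succVars n)).map (rename (Equiv.swap ((a : ℕ) + 1) ((b : ℕ) + 1)))
        = (Matrix.vandermonde (succVars n)).submatrix (Equiv.swap a b) id := by
    ext i j
    simp [succVars, hswap]
  rw [AlgHom.map_det, AlgHom.mapMatrix_apply, hrows, Matrix.det_permute,
    Equiv.Perm.sign_swap hab]
  simp

lemma rename_swap_chiV {a b : ℕ} (ha : a ∈ Icc 1 n) (hb : b ∈ Icc 1 n) (hab : a ≠ b) :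
    rename (Equiv.swap a b) (chiV n) = -chiV n := by
  rw [mem_Icc] at ha hb
  obtain ⟨k, hk⟩ := chiV_eq_neg_one_pow_smul_det (n := n)
  have h := rename_swap_det_vandermonde_succVars (n := n)
    (a := ⟨a - 1, by omega⟩) (b := ⟨b - 1, by omega⟩) (by simp [Fin.ext_iff]; omega)
  simp only [Nat.sub_add_cancel ha.1, Nat.sub_add_cancel hb.1] at h
  rw [hk, map_smul, h, smul_neg]

lemma pinner_chiV_self : pinner (chiV n) (chiV n) = n.factorial := by
  obtain ⟨k, hk⟩ := chiV_eq_neg_one_pow_smul_det (n := n)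
  rw [hk, pinner_smul_left, pinner_smul_right, pinner_det_vandermonde_succVars_self, ← mul_assoc,
    ← mul_pow, neg_one_mul, neg_neg, one_pow, one_mul]

lemma sum_Icc_eq_of_coeff_chiV_ne_zero {d : ℕ →₀ ℕ} (hd : coeff d (chiV n) ≠ 0) :
    ∑ a ∈ Icc 1 n, d a = ∑ i ∈ range n, i := by
  obtain ⟨k, hk⟩ := chiV_eq_neg_one_pow_smul_det (n := n)
  rw [hk, coeff_smul, coeff_det_vandermonde_succVars] at hd
  obtain ⟨σ, -, hσ⟩ := exists_ne_zero_of_sum_ne_zero (right_ne_zero_of_smul hd)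
  obtain ⟨rfl, -⟩ := not_forall.mp (mt ite_eq_right_iff.mpr hσ)
  exact sum_Icc_vandermondeExponent σ

end Vandermonde

section Factorization

lemma neg_one_pow_smul_neg_one_pow_smul {M : Type*} [AddCommGroup M] [Module ℝ M] (k : ℕ)
    (x : M) : (-1 : ℝ) ^ k • (-1 : ℝ) ^ k • x = x := by
  rw [smul_smul, ← mul_pow, neg_one_mul, neg_neg, one_pow, one_smul]

def sortPair (p : ℕ × ℕ) : ℕ × ℕ := (min p.1 p.2, max p.1 p.2)

lemma exists_X_sortPair_sub_eq (p : ℕ × ℕ) : ∃ k : ℕ,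
    (X (sortPair p).1 - X (sortPair p).2 : MvPolynomial ℕ ℝ) = (-1 : ℝ) ^ k • (X p.1 - X p.2) := by
  rcases le_total p.1 p.2 with h | h
  · exact ⟨0, by simp [sortPair, h]⟩
  · exact ⟨1, by simp [sortPair, h]⟩

lemma exists_prod_sortPair_eq_smul_chiP (J : Finset (ℕ × ℕ)) : ∃ k : ℕ,
    ∏ p ∈ J, (X (sortPair p).1 - X (sortPair p).2 : MvPolynomial ℕ ℝ) = (-1 : ℝ) ^ k • chiP J := by
  classical
  induction J using Finset.induction with
  | empty => exact ⟨0, by simp [chiP]⟩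
  | insert p J hp ih =>
    obtain ⟨k, hk⟩ := ih
    obtain ⟨m, hm⟩ := exists_X_sortPair_sub_eq p
    refine ⟨m + k, ?_⟩
    rw [prod_insert hp, chiP, prod_insert hp, hk, hm, ← chiP, smul_mul_smul_comm, pow_add]

lemma sortPair_eq_sortPair_iff {p q : ℕ × ℕ} : sortPair p = sortPair q ↔ p = q ∨ p = q.swap := by
  simp only [sortPair, Prod.ext_iff, Prod.fst_swap, Prod.snd_swap]
  omega

variable {n : ℕ} {I : Finset (ℕ × ℕ)} {a b c : ℕ}

lemma sortPair_injOn_erase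
    (hiju : ∀ x y : ℕ, x ≠ y → (x, y) ∈ I → (y, x) ∈ I → (x = a ∧ y = b) ∨ (x = b ∧ y = a)) :
    Set.InjOn sortPair (I.erase (a, b) : Set (ℕ × ℕ)) := by
  intro p hp q hq hpq
  simp only [coe_erase, Set.mem_sdiff, mem_coe, Set.mem_singleton_iff] at hp hq
  rcases sortPair_eq_sortPair_iff.mp hpq with h | rfl
  · exact h
  by_cases hdiag : q.1 = q.2
  · exact Prod.ext hdiag.symm hdiag
  rcases hiju q.1 q.2 hdiag hq.1 hp.1 with ⟨h1, h2⟩ | ⟨h1, h2⟩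
  · exact absurd (Prod.ext h1 h2) hq.2
  · exact absurd (Prod.ext h2 h1) hp.2

lemma image_sortPair_erase (hI : I ⊆ Icc 1 n ×ˢ Icc 1 n) (hstrict : ∀ p ∈ I, p.1 ≠ p.2)
    (h2 : (b, a) ∈ I) (h3 : (a, c) ∉ I) (h4 : (c, a) ∉ I)
    (hklu : ∀ x y : ℕ, x ∈ Icc 1 n → y ∈ Icc 1 n → x ≠ y →
      (x, y) ∉ I → (y, x) ∉ I → (x = a ∧ y = c) ∨ (x = c ∧ y = a)) :
    (I.erase (a, b)).image sortPair = (increasingPairs n).erase (sortPair (a, c)) := by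
  ext q
  simp only [mem_image, mem_erase]
  constructor
  · rintro ⟨p, ⟨hpab, hpI⟩, rfl⟩
    refine ⟨fun h => ?_, ?_⟩
    · rcases sortPair_eq_sortPair_iff.mp h with rfl | rfl
      exacts [h3 hpI, h4 hpI]
    · have hp := mem_product.mp (hI hpI)
      have := hstrict p hpI
      simp only [mem_Icc] at hp
      simp only [mem_increasingPairs, sortPair]
      omega
  · rintro ⟨hqac, hq⟩
    rw [mem_increasingPairs] at hq
    have hsort : sortPair q = q := by ext <;> simp [sortPair] <;> omega
    by_cases hqI : q ∈ I
    · by_cases hqab : q = (a, b)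
      · subst hqab
        refine ⟨(b, a), ⟨fun h => ?_, h2⟩, ?_⟩
        · simp only [Prod.ext_iff] at h; omega
        · simp only [sortPair, Prod.mk.injEq] at hq ⊢
          omega
      · exact ⟨q, ⟨hqab, hqI⟩, hsort⟩
    · have hswapI : q.swap ∈ I := by
        by_contra hswapI
        refine hqac ?_
        rw [← hsort]
        refine sortPair_eq_sortPair_iff.mpr ?_
        rcases hklu q.1 q.2 (by simp; omega) (by simp; omega) (by omega) hqI hswapI with
          ⟨h1, h2⟩ | ⟨h1, h2⟩
        · exact Or.inl (Prod.ext h1 h2)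
        · exact Or.inr (Prod.ext h1 h2)
      refine ⟨q.swap, ⟨fun h => hqI ?_, hswapI⟩, ?_⟩
      · rwa [← Prod.swap_swap q, h]
      · rw [sortPair_eq_sortPair_iff.mpr (Or.inr rfl), hsort]

lemma exists_chiP_eq_and_chiV_eq (hI : I ⊆ Icc 1 n ×ˢ Icc 1 n) (hstrict : ∀ p ∈ I, p.1 ≠ p.2)
    (hc : c ∈ Icc 1 n) (hac : a ≠ c) (h1 : (a, b) ∈ I) (h2 : (b, a) ∈ I)
    (hiju : ∀ x y : ℕ, x ≠ y → (x, y) ∈ I → (y, x) ∈ I → (x = a ∧ y = b) ∨ (x = b ∧ y = a))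
    (h3 : (a, c) ∉ I) (h4 : (c, a) ∉ I)
    (hklu : ∀ x y : ℕ, x ∈ Icc 1 n → y ∈ Icc 1 n → x ≠ y →
      (x, y) ∉ I → (y, x) ∉ I → (x = a ∧ y = c) ∨ (x = c ∧ y = a)) :
    ∃ (k : ℕ) (P : MvPolynomial ℕ ℝ),
      chiP I = (-1 : ℝ) ^ k • ((X a - X b) * P) ∧ chiV n = (X a - X c) * P := by
  have ha := (mem_product.mp (hI h1)).1
  have hac_mem : sortPair (a, c) ∈ increasingPairs n := by
    simp only [mem_Icc] at ha hc
    simp only [mem_increasingPairs, sortPair]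
    omega
  obtain ⟨k₁, hk₁⟩ := exists_X_sortPair_sub_eq (a, c)
  obtain ⟨k₂, hk₂⟩ := exists_prod_sortPair_eq_smul_chiP (I.erase (a, b))
  set R := ∏ q ∈ (increasingPairs n).erase (sortPair (a, c)), (X q.1 - X q.2 : MvPolynomial ℕ ℝ)
    with hR_def
  have hR : R = (-1 : ℝ) ^ k₂ • chiP (I.erase (a, b)) := by
    rw [← hk₂, hR_def, ← image_sortPair_erase hI hstrict h2 h3 h4 hklu,
      prod_image (sortPair_injOn_erase hiju)]
  refine ⟨k₁ + k₂, (-1 : ℝ) ^ k₁ • R, ?_, ?_⟩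
  · rw [chiP, ← mul_prod_erase _ _ h1, ← chiP, ← neg_one_pow_smul_neg_one_pow_smul k₂ (chiP _),
      ← hR, mul_smul_comm, mul_smul_comm, pow_add, mul_smul, smul_comm ((-1 : ℝ) ^ k₁),
      neg_one_pow_smul_neg_one_pow_smul]
  · rw [chiV_eq_prod_increasingPairs, ← mul_prod_erase _ _ hac_mem, hk₁, smul_mul_assoc,
      mul_smul_comm]

end Factorization

section KidealOrthogonal

variable {n : ℕ}

lemma prod_X_eq_monomial (s : Finset ℕ) :
    ∏ i ∈ s, (X i : MvPolynomial ℕ ℝ) = monomial (∑ i ∈ s, Finsupp.single i 1) 1 := by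
  rw [monomial_sum_one]
  rfl

lemma rename_sigmaE {τ : Equiv.Perm ℕ} (hτ : (Icc 1 n).map τ.toEmbedding = Icc 1 n) (k : ℕ) :
    rename τ (sigmaE n k) = sigmaE n k := by
  conv_rhs => rw [sigmaE, ← hτ, powersetCard_map, sum_map]
  simp only [sigmaE, map_sum, map_prod, rename_X]
  refine sum_congr rfl fun s _ => ?_
  simp [prod_map]

lemma sum_range_card_le_sum (T : Finset ℕ) : ∑ i ∈ range #T, i ≤ ∑ t ∈ T, t := by
  have h := sum_range_le_sum (s := T.map Nat.castEmbedding) (c := 0) (by simp)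
  simp only [card_map, zero_add, sum_map, Nat.castEmbedding_apply] at h
  rw [← Nat.cast_sum, ← Nat.cast_sum] at h
  exact_mod_cast h

lemma sum_range_le_sum_Icc_of_injOn {v : ℕ →₀ ℕ} (hv : Set.InjOn v (Icc 1 n)) :
    ∑ i ∈ range n, i ≤ ∑ a ∈ Icc 1 n, v a := by
  have h := sum_range_card_le_sum ((Icc 1 n).image v)
  rwa [card_image_of_injOn hv, Nat.card_Icc, Nat.add_sub_cancel, sum_image hv] at h

lemma sum_Icc_sum_single_one {s : Finset ℕ} (hs : s ⊆ Icc 1 n) :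
    ∑ a ∈ Icc 1 n, (∑ i ∈ s, Finsupp.single i 1 : ℕ →₀ ℕ) a = #s := by
  simp only [Finsupp.finsetSum_apply, Finsupp.single_apply]
  rw [sum_comm, card_eq_sum_ones]
  exact sum_congr rfl fun i hi => by rw [sum_ite_eq, if_pos (hs hi)]

lemma coeff_add_sum_single_chiV_eq_zero {v : ℕ →₀ ℕ} (hv : Set.InjOn v (Icc 1 n))
    {s : Finset ℕ} (hs : s ⊆ Icc 1 n) (hne : s.Nonempty) :
    coeff (v + ∑ i ∈ s, Finsupp.single i 1) (chiV n) = 0 := by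
  by_contra h
  have hdeg := sum_Icc_eq_of_coeff_chiV_ne_zero h
  simp only [Finsupp.coe_add, Pi.add_apply, sum_add_distrib, sum_Icc_sum_single_one hs] at hdeg
  have := sum_range_le_sum_Icc_of_injOn hv
  have := hne.card_pos
  omega

lemma pinner_monomial_mul_sigmaE_chiV_eq_zero {k : ℕ} (hk : 1 ≤ k) (v : ℕ →₀ ℕ) (r : ℝ) :
    pinner (monomial v r * sigmaE n k) (chiV n) = 0 := by
  by_cases hv : Set.InjOn v (Icc 1 n)
  · rw [sigmaE, mul_sum, pinner_sum_left]
    refine sum_eq_zero fun s hs => ?_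
    obtain ⟨hsub, hcard⟩ := mem_powersetCard.mp hs
    rw [prod_X_eq_monomial, monomial_mul, mul_one, pinner_monomial_left,
      coeff_add_sum_single_chiV_eq_zero hv hsub (card_pos.mp (by omega)), mul_zero]
  · rw [Set.InjOn] at hv
    push Not at hv
    obtain ⟨a, ha, b, hb, hvab, hab⟩ := hv
    have hswap : {x | Equiv.swap a b x ≠ x} ⊆ (Icc 1 n : Set ℕ) := fun x hx => by
      rcases Equiv.eq_or_eq_of_swap_apply_ne_self hx with rfl | rfl
      exacts [ha, hb]
    refine pinner_eq_zero_of_rename_eq_neg (τ := Equiv.swap a b) ?_ (rename_swap_chiV ha hb hab)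
    rw [map_mul, rename_monomial, rename_sigmaE (map_perm hswap)]
    congr
    ext t
    rw [Finsupp.mapDomain_equiv_apply, Equiv.symm_swap, Equiv.swap_apply_def]
    split_ifs <;> subst_vars <;> simp [hvab]

lemma pinner_chiV_eq_zero_of_mem_Kideal {f : MvPolynomial ℕ ℝ} (hf : f ∈ Kideal n) :
    pinner f (chiV n) = 0 := by
  suffices ∀ q, pinner (q * f) (chiV n) = 0 by simpa using this 1
  refine Submodule.span_induction ?_ ?_ ?_ ?_ hf
  · rintro _ ⟨k, hk, rfl⟩ q
    rw [q.as_sum, sum_mul, pinner_sum_left]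
    exact sum_eq_zero fun v _ => pinner_monomial_mul_sigmaE_chiV_eq_zero hk.1 v _
  · simp [pinner]
  · intro x y _ _ hx hy q
    rw [mul_add, pinner_add_left, hx, hy, add_zero]
  · intro r x _ hx q
    rw [smul_eq_mul, ← mul_assoc]
    exact hx _

end KidealOrthogonal

lemma pinner_X_sub_X_mul_eq_half {V P : MvPolynomial ℕ ℝ} {a b c : ℕ} (hab : a ≠ b) (hbc : b ≠ c)
    (hac : a ≠ c) (hV : V = (X a - X c) * P) (hanti : rename (Equiv.swap a c) V = -V) :
    pinner ((X a - X b) * P) V = pinner V V / 2 := by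
  have hP : rename (Equiv.swap a c) P = P := by
    refine mul_left_cancel₀ (sub_ne_zero.mpr ((X_injective (R := ℝ)).ne hac)) ?_
    rw [hV, map_mul, map_sub, rename_X, rename_X, Equiv.swap_apply_left,
      Equiv.swap_apply_right] at hanti
    linear_combination -hanti
  have hswap : rename (Equiv.swap a c) ((X c - X b) * P) = (X a - X b) * P := by
    rw [map_mul, map_sub, rename_X, rename_X, Equiv.swap_apply_right,
      Equiv.swap_apply_of_ne_of_ne hab.symm hbc, hP]
  have hneg : pinner ((X c - X b) * P) V = -pinner ((X a - X b) * P) V := by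
    rw [← pinner_rename_equiv (Equiv.swap a c), hswap, hanti, ← neg_one_smul ℝ V,
      pinner_smul_right, neg_one_mul]
  have hsplit : pinner ((X a - X b) * P) V = pinner V V + pinner ((X c - X b) * P) V := by
    rw [← pinner_add_left, hV]
    ring_nf
  linarith

lemma exists_pinner_chiP_chiV_eq {n a b c : ℕ} {I : Finset (ℕ × ℕ)}
    (hI : I ⊆ Icc 1 n ×ˢ Icc 1 n) (hstrict : ∀ p ∈ I, p.1 ≠ p.2)
    (hc : c ∈ Icc 1 n) (hac : a ≠ c) (h1 : (a, b) ∈ I) (h2 : (b, a) ∈ I)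
    (hiju : ∀ x y : ℕ, x ≠ y → (x, y) ∈ I → (y, x) ∈ I → (x = a ∧ y = b) ∨ (x = b ∧ y = a))
    (h3 : (a, c) ∉ I) (h4 : (c, a) ∉ I)
    (hklu : ∀ x y : ℕ, x ∈ Icc 1 n → y ∈ Icc 1 n → x ≠ y →
      (x, y) ∉ I → (y, x) ∉ I → (x = a ∧ y = c) ∨ (x = c ∧ y = a)) :
    ∃ k : ℕ, pinner (chiP I) (chiV n) = (-1) ^ k * (n.factorial / 2) := by
  obtain ⟨k, P, hI_eq, hV_eq⟩ :=
    exists_chiP_eq_and_chiV_eq hI hstrict hc hac h1 h2 hiju h3 h4 hklu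
  have hab : a ≠ b := hstrict _ h1
  have hbc : b ≠ c := fun h => h3 (h ▸ h1)
  refine ⟨k, ?_⟩
  rw [hI_eq, pinner_smul_left, pinner_X_sub_X_mul_eq_half hab hbc hac hV_eq
    (rename_swap_chiV (mem_product.mp (hI h1)).1 hc hac), pinner_chiV_self]

theorem complexity_one_overlap_general (n : ℕ) (I : Finset (ℕ × ℕ))
    (hI : I ⊆ Finset.Icc 1 n ×ˢ Finset.Icc 1 n)
    (hstrict : ∀ p ∈ I, p.1 ≠ p.2)
    (i j k l : ℕ)
    (hijmem : (i, j) ∈ I ∧ (j, i) ∈ I)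
    (hij_unique : ∀ a b : ℕ, a ≠ b → (a, b) ∈ I → (b, a) ∈ I →
      (a = i ∧ b = j) ∨ (a = j ∧ b = i))
    (hk : k ∈ Finset.Icc 1 n) (hl : l ∈ Finset.Icc 1 n) (hkl : k ≠ l)
    (hklmem : (k, l) ∉ I ∧ (l, k) ∉ I)
    (hkl_unique : ∀ a b : ℕ, a ∈ Finset.Icc 1 n → b ∈ Finset.Icc 1 n → a ≠ b →
      (a, b) ∉ I → (b, a) ∉ I → (a = k ∧ b = l) ∨ (a = l ∧ b = k))
    (hmeet : i = k ∨ i = l ∨ j = k ∨ j = l) :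
    |pinner (chiP I) (chiV n)| = (n.factorial : ℝ) / 2 ∧ chiP I ∉ Kideal n := by
  obtain ⟨hij_mem, hji_mem⟩ := hijmem
  obtain ⟨hkl_not, hlk_not⟩ := hklmem
  have hji_unique a b hab hab' hba := (hij_unique a b hab hab' hba).symm
  have hlk_unique a b ha hb hab hab' hba := (hkl_unique a b ha hb hab hab' hba).symm
  obtain ⟨e, he⟩ : ∃ e : ℕ, pinner (chiP I) (chiV n) = (-1) ^ e * (n.factorial / 2) := by
    rcases hmeet with rfl | rfl | rfl | rfl
    · exact exists_pinner_chiP_chiV_eq hI hstrict hl hkl hij_mem hji_mem hij_unique hkl_not hlk_not hkl_unique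
    · exact exists_pinner_chiP_chiV_eq hI hstrict hk hkl.symm hij_mem hji_mem hij_unique hlk_not hkl_not
        hlk_unique
    · exact exists_pinner_chiP_chiV_eq hI hstrict hl hkl hji_mem hij_mem hji_unique hkl_not hlk_not hkl_unique
    · exact exists_pinner_chiP_chiV_eq hI hstrict hk hkl.symm hji_mem hij_mem hji_unique hlk_not hkl_not
        hlk_unique
  refine ⟨?_, fun hmem => ?_⟩
  · rw [he, abs_mul, abs_pow, abs_neg, abs_one, one_pow, one_mul, abs_of_nonneg (by positivity)]
  · have h0 := pinner_chiV_eq_zero_of_mem_Kideal hmem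
    rw [he] at h0
    simp [Nat.factorial_ne_zero] at h0

/-- A pattern `I ∈ P'_n` of complexity 1 whose doubled pair `{i,j}` meets the missing
pair `{k,l}` satisfies `⟨χ_I, χ_n⟩ = ± n!/2`; in particular `I` is `n`-nonsingular. -/
theorem complexity_one_overlap (n : ℕ) (hn : 3 ≤ n) (I : Finset (ℕ × ℕ))
    (hI : I ⊆ Finset.Icc 1 n ×ˢ Finset.Icc 1 n)
    (hstrict : ∀ p ∈ I, p.1 ≠ p.2)
    (hcard : I.card = n * (n - 1) / 2)
    (i j k l : ℕ)
    (hij : i ≠ j) (hijmem : (i, j) ∈ I ∧ (j, i) ∈ I)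
    (hij_unique : ∀ a b : ℕ, a ≠ b → (a, b) ∈ I → (b, a) ∈ I →
      (a = i ∧ b = j) ∨ (a = j ∧ b = i))
    (hk : k ∈ Finset.Icc 1 n) (hl : l ∈ Finset.Icc 1 n) (hkl : k ≠ l)
    (hklmem : (k, l) ∉ I ∧ (l, k) ∉ I)
    (hkl_unique : ∀ a b : ℕ, a ∈ Finset.Icc 1 n → b ∈ Finset.Icc 1 n → a ≠ b →
      (a, b) ∉ I → (b, a) ∉ I → (a = k ∧ b = l) ∨ (a = l ∧ b = k))
    (hmeet : i = k ∨ i = l ∨ j = k ∨ j = l) :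
    |pinner (chiP I) (chiV n)| = (n.factorial : ℝ) / 2 ∧ chiP I ∉ Kideal n :=
  complexity_one_overlap_general n I hI hstrict i j k l hijmem hij_unique hk hl hkl hklmem
    hkl_unique hmeet
end

section
/- Let n ≥ 4 and let I ∈ P'_n have complexity 1. Let {i,j} be the unique 2-element subset of {1,…,n} with both (i,j) ∈ I and (j,i) ∈ I, and let {k,l} be the unique 2-element subset with neither (k,l) nor (l,k) in I. If i, j, k, l are four distinct integers, then I is n-singular, i.e., χ_I ∈ K(n). -/
/-!
Since `{k, l}` is the only missing pair and it avoids `i` and `j`, every `b ∉ {i, j}` is joined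
to `i` and to `j` by a pair of `I` in some orientation, and the pair `{i, j}` occurs in both
orientations. So `χ_I` is divisible by `P_i P_j`, where `P_c = ∏_{b ≠ c} (x_c - x_b)`.

Modulo `K(n)` the polynomial `∏_a (T - x_a)` becomes `T^n`, so each class `ξ_c` of `x_c` satisfies
`ξ_c^n = 0` and `∏_{b ≠ c} (T - ξ_b) = ∑_{p < n} T^p ξ_c^(n-1-p)`. Evaluating at `T = ξ_c` gives
`P_c ≡ n x_c^(n-1)`; evaluating at `T = ξ_d` and multiplying by `ξ_d^(n-1)` gives
`x_c^(n-1) x_d^(n-1) ≡ 0`. Hence `P_i P_j ∈ K(n)`.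
-/

open Finset Polynomial

section RootsOfXPow

variable {R ι : Type*} [CommRing R] [DecidableEq ι] {s : Finset ι} {f : ι → R}

omit [DecidableEq ι] in
theorem pow_card_eq_zero_of_prod_X_sub_C_eq_X_pow (hf : ∏ a ∈ s, (X - C (f a)) = X ^ #s)
    {c : ι} (hc : c ∈ s) : f c ^ #s = 0 := by
  simpa [eval_prod, prod_eq_zero hc] using (congrArg (eval (f c)) hf).symm

theorem prod_erase_X_sub_C_eq_geom_sum₂ (hf : ∏ a ∈ s, (X - C (f a)) = X ^ #s)
    {c : ι} (hc : c ∈ s) :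
    ∏ b ∈ s.erase c, (X - C (f b)) = ∑ p ∈ range #s, X ^ p * C (f c) ^ (#s - 1 - p) := by
  refine (monic_X_sub_C (f c)).isRegular.left ?_
  dsimp only
  rw [mul_prod_erase s (fun a => X - C (f a)) hc, hf, mul_comm, geom_sum₂_mul, ← C_pow,
    pow_card_eq_zero_of_prod_X_sub_C_eq_X_pow hf hc, C_0, sub_zero]

theorem prod_erase_sub_eq_card_mul_pow (hf : ∏ a ∈ s, (X - C (f a)) = X ^ #s)
    {c : ι} (hc : c ∈ s) : ∏ b ∈ s.erase c, (f c - f b) = #s * f c ^ (#s - 1) := by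
  have h := congrArg (eval (f c)) (prod_erase_X_sub_C_eq_geom_sum₂ hf hc)
  simp only [eval_prod, eval_finsetSum, eval_sub, eval_mul, eval_pow, eval_X, eval_C] at h
  have hterm : ∀ p ∈ range #s, f c ^ p * f c ^ (#s - 1 - p) = f c ^ (#s - 1) := fun p hp => by
    rw [← pow_add, Nat.add_sub_cancel' (Nat.le_sub_one_of_lt (mem_range.mp hp))]
  rw [h, sum_congr rfl hterm, sum_const, card_range, nsmul_eq_mul]

theorem pow_mul_pow_eq_zero_of_prod_X_sub_C_eq_X_pow (hf : ∏ a ∈ s, (X - C (f a)) = X ^ #s)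
    {c d : ι} (hc : c ∈ s) (hd : d ∈ s) (hcd : c ≠ d) :
    f c ^ (#s - 1) * f d ^ (#s - 1) = 0 := by
  have hgeom : ∑ p ∈ range #s, f d ^ p * f c ^ (#s - 1 - p) = 0 := by
    have h := congrArg (eval (f d)) (prod_erase_X_sub_C_eq_geom_sum₂ hf hc)
    simp only [eval_prod, eval_finsetSum, eval_sub, eval_mul, eval_pow, eval_X, eval_C] at h
    rw [← h, prod_eq_zero (mem_erase.mpr ⟨hcd.symm, hd⟩) (sub_self (f d))]
  have hd0 := pow_card_eq_zero_of_prod_X_sub_C_eq_X_pow hf hd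
  have hs : 0 < #s := card_pos.mpr ⟨c, hc⟩
  calc f c ^ (#s - 1) * f d ^ (#s - 1)
      = f d ^ (#s - 1) * ∑ p ∈ range #s, f d ^ p * f c ^ (#s - 1 - p) := by
        rw [mul_sum, sum_eq_single 0 (fun p _ hp => by
          rw [← mul_assoc, ← pow_add, pow_eq_zero_of_le (by omega) hd0, zero_mul])
          (fun h => absurd (mem_range.mpr hs) h)]
        rw [pow_zero, one_mul, Nat.sub_zero, mul_comm]
    _ = 0 := by rw [hgeom, mul_zero]

theorem prod_erase_sub_mul_prod_erase_sub_eq_zero (hf : ∏ a ∈ s, (X - C (f a)) = X ^ #s)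
    {c d : ι} (hc : c ∈ s) (hd : d ∈ s) (hcd : c ≠ d) :
    (∏ b ∈ s.erase c, (f c - f b)) * ∏ b ∈ s.erase d, (f d - f b) = 0 := by
  rw [prod_erase_sub_eq_card_mul_pow hf hc, prod_erase_sub_eq_card_mul_pow hf hd]
  linear_combination (#s : R) ^ 2 * pow_mul_pow_eq_zero_of_prod_X_sub_C_eq_X_pow hf hc hd hcd

end RootsOfXPow

theorem sigmaE_mem_Kideal_s9 {n m : ℕ} (h1 : 1 ≤ m) (h2 : m ≤ n) : sigmaE n m ∈ Kideal n :=
  Ideal.subset_span ⟨m, ⟨h1, h2⟩, rfl⟩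

theorem prod_X_sub_C_mk_X_eq_X_pow (n : ℕ) :
    ∏ a ∈ Icc 1 n, (X - C (Ideal.Quotient.mk (Kideal n) (MvPolynomial.X a))) =
      X ^ #(Icc 1 n) := by
  set x : ℕ → MvPolynomial ℕ ℝ ⧸ Kideal n := fun a => Ideal.Quotient.mk _ (MvPolynomial.X a)
  have hesymm : ∀ m ∈ range n, ((Icc 1 n).val.map x).esymm (m + 1) = 0 := fun m hm => by
    rw [Finset.esymm_map_val, ← Ideal.Quotient.eq_zero_iff_mem.mpr
      (sigmaE_mem_Kideal_s9 (Nat.le_add_left 1 m) (mem_range.mp hm))]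
    simp [x, sigmaE, map_sum, map_prod]
  have h := Multiset.prod_X_sub_X_eq_sum_esymm ((Icc 1 n).val.map x)
  rw [Multiset.map_map, Multiset.card_map, card_val, Nat.card_Icc, Nat.add_sub_cancel,
    sum_range_succ', sum_eq_zero fun m hm => by rw [hesymm m hm, C_0, zero_mul, mul_zero]] at h
  simpa [Multiset.esymm] using h

theorem chiP_filter_ne_mem_Kideal {n i j : ℕ} (hi : i ∈ Icc 1 n) (hj : j ∈ Icc 1 n)
    (hij : i ≠ j) :
    chiP ((({i, j} : Finset ℕ) ×ˢ Icc 1 n).filter fun e => e.1 ≠ e.2) ∈ Kideal n := by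
  rw [← Ideal.Quotient.eq_zero_iff_mem, chiP, prod_filter, prod_product, prod_pair hij]
  simp_rw [← prod_filter, filter_ne, map_mul, map_prod, map_sub]
  exact prod_erase_sub_mul_prod_erase_sub_eq_zero (prod_X_sub_C_mk_X_eq_X_pow n) hi hj hij

theorem chiP_dvd_chiP {E I : Finset (ℕ × ℕ)} (hmem : ∀ e ∈ E, e ∈ I ∨ e.swap ∈ I)
    (hswap : ∀ e ∈ E, e.swap ∈ E → e ∈ I) : chiP E ∣ chiP I := by
  classical
  let orient : ℕ × ℕ → ℕ × ℕ := fun e => if e ∈ I then e else e.swap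
  have horient : Set.InjOn orient E := by
    intro e he e' he' h
    by_cases h1 : e ∈ I <;> by_cases h2 : e' ∈ I <;>
      simp only [orient, h1, h2, if_true, if_false] at h
    · exact h
    · subst h; exact absurd (hswap e' he' he) h2
    · subst h; exact absurd (hswap e he he') h1
    · exact Prod.swap_injective h
  calc chiP E ∣ ∏ e ∈ E, (MvPolynomial.X (orient e).1 - MvPolynomial.X (orient e).2) :=
        prod_dvd_prod_of_dvd _ _ fun e _ => by
          by_cases h : e ∈ I
          · simp [orient, h]
          · simp only [orient, h, if_false, Prod.fst_swap, Prod.snd_swap]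
            exact (dvd_neg.mpr dvd_rfl).trans (neg_sub _ _).dvd
    _ = ∏ p ∈ E.image orient, (MvPolynomial.X p.1 - MvPolynomial.X p.2) := by
        rw [prod_image horient]
    _ ∣ chiP I := prod_dvd_prod_of_subset _ _ _ <| image_subset_iff.mpr fun e he => by
        by_cases h : e ∈ I
        · simp [orient, h]
        · simpa [orient, h] using (hmem e he).resolve_left h

theorem complexity_one_disjoint_singular_general (n : ℕ) (I : Finset (ℕ × ℕ))
    (hI : I ⊆ Finset.Icc 1 n ×ˢ Finset.Icc 1 n)
    (i j k l : ℕ)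
    (hij : i ≠ j) (hijmem : (i, j) ∈ I ∧ (j, i) ∈ I)
    (hkl_unique : ∀ a b : ℕ, a ∈ Finset.Icc 1 n → b ∈ Finset.Icc 1 n → a ≠ b →
      (a, b) ∉ I → (b, a) ∉ I → (a = k ∧ b = l) ∨ (a = l ∧ b = k))
    (hdistinct : i ≠ k ∧ i ≠ l ∧ j ≠ k ∧ j ≠ l) :
    chiP I ∈ Kideal n := by
  obtain ⟨hi, hj⟩ := mem_product.mp (hI hijmem.1)
  set E := (({i, j} : Finset ℕ) ×ˢ Icc 1 n).filter fun e => e.1 ≠ e.2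
  have hcover : ∀ e ∈ E, e ∈ I ∨ e.swap ∈ I := by
    rintro ⟨a, b⟩ he
    simp only [E, mem_filter, mem_product, mem_insert, mem_singleton] at he
    obtain ⟨⟨ha, hb⟩, hab⟩ := he
    by_contra! h
    have ha' : a ∈ Icc 1 n := by rcases ha with rfl | rfl <;> assumption
    rcases hkl_unique a b ha' hb hab h.1 h.2 with ⟨rfl, -⟩ | ⟨rfl, -⟩ <;> omega
  have hdouble : ∀ e ∈ E, e.swap ∈ E → e ∈ I := by
    rintro ⟨a, b⟩ he hswap
    simp only [E, mem_filter, mem_product, mem_insert, mem_singleton, Prod.swap_prod_mk]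
      at he hswap
    obtain ⟨⟨rfl | rfl, -⟩, hab⟩ := he <;> obtain ⟨⟨rfl | rfl, -⟩, -⟩ := hswap
    exacts [absurd rfl hab, hijmem.1, hijmem.2, absurd rfl hab]
  exact Ideal.mem_of_dvd _ (chiP_dvd_chiP hcover hdouble) (chiP_filter_ne_mem_Kideal hi hj hij)

/-- A pattern `I ∈ P'_n` of complexity 1 whose doubled pair `{i,j}` is disjoint from
the missing pair `{k,l}` is `n`-singular: `χ_I ∈ K(n)`. -/
theorem complexity_one_disjoint_singular (n : ℕ) (hn : 4 ≤ n) (I : Finset (ℕ × ℕ))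
    (hI : I ⊆ Finset.Icc 1 n ×ˢ Finset.Icc 1 n)
    (hstrict : ∀ p ∈ I, p.1 ≠ p.2)
    (hcard : I.card = n * (n - 1) / 2)
    (i j k l : ℕ)
    (hij : i ≠ j) (hijmem : (i, j) ∈ I ∧ (j, i) ∈ I)
    (hij_unique : ∀ a b : ℕ, a ≠ b → (a, b) ∈ I → (b, a) ∈ I →
      (a = i ∧ b = j) ∨ (a = j ∧ b = i))
    (hk : k ∈ Finset.Icc 1 n) (hl : l ∈ Finset.Icc 1 n) (hkl : k ≠ l)
    (hklmem : (k, l) ∉ I ∧ (l, k) ∉ I)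
    (hkl_unique : ∀ a b : ℕ, a ∈ Finset.Icc 1 n → b ∈ Finset.Icc 1 n → a ≠ b →
      (a, b) ∉ I → (b, a) ∉ I → (a = k ∧ b = l) ∨ (a = l ∧ b = k))
    (hdistinct : i ≠ k ∧ i ≠ l ∧ j ≠ k ∧ j ≠ l) :
    chiP I ∈ Kideal n :=
  complexity_one_disjoint_singular_general n I hI i j k l hij hijmem hkl_unique hdistinct
end

section
/- For integers 1 ≤ r ≤ m ≤ n, the polynomial ∏_{m < i ≤ n} (x_r − x_i) is congruent to ∂_r h_{n−m+1,m} modulo K(n); that is, ∏_{i=m+1}^{n} (x_r − x_i) − ∂h_{n−m+1,m}/∂x_r ∈ K(n). -/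
/-- The complete homogeneous symmetric polynomial `h_{k,m}` of degree `k`
in the variables `x_1, …, x_m`. -/
noncomputable def hsym (k m : ℕ) : MvPolynomial ℕ ℝ :=
  ∑ s ∈ (Finset.Icc 1 m).sym k, (Multiset.map MvPolynomial.X s.1).prod

/-!
Put `A = {1, …, m}` and `T = {m+1, …, n}`. By Vieta, `∏_{i ∈ T} (x_r - x_i)` is
`∑_k (-1)^k e_k(T) x_r^{|T|-k}`, while for `r ∈ A` one has
`∂_r h_{|T|+1}(A) = ∑_k h_k(A) x_r^{|T|-k}`. So it suffices that `(-1)^k e_k(T) ≡ h_k(A)` modulo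
any ideal containing the positive-degree elementary symmetric polynomials of `A ∪ T`. This is read
off generating functions: `(∑_k h_k(A) t^k) · ∏_{i ∈ A} (1 - x_i t) = 1`, and modulo the ideal
`∏_{i ∈ A ∪ T} (1 - x_i t) ≡ 1`, hence `∏_{i ∈ T} (1 - x_i t) ≡ ∑_k h_k(A) t^k`.
-/

open MvPolynomial Finset

variable {σ R : Type*}

section CommSemiring
variable [CommSemiring R]

-- `sigmaE n k` and `hsym k m` are, by definition, `esymmOn (Icc 1 n) k` and `hsymmOn (Icc 1 m) k`.
noncomputable def esymmOn (S : Finset σ) (k : ℕ) : MvPolynomial σ R :=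
  ∑ t ∈ S.powersetCard k, ∏ i ∈ t, X i

theorem pderiv_prod_map_X_of_notMem {r : σ} {s : Multiset σ} (hr : r ∉ s) :
    pderiv r (s.map (X (R := R))).prod = 0 := by
  induction s using Multiset.induction_on with
  | empty => simp
  | cons a s ih =>
    rw [Multiset.mem_cons, not_or] at hr
    rw [Multiset.map_cons, Multiset.prod_cons, pderiv_mul, ih hr.2,
      pderiv_X_of_ne (Ne.symm hr.1), mul_zero, zero_mul, add_zero]

variable [DecidableEq σ]

noncomputable def hsymmOn (S : Finset σ) (k : ℕ) : MvPolynomial σ R :=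
  ∑ s ∈ S.sym k, (s.1.map X).prod

@[simp]
theorem hsymmOn_zero (S : Finset σ) : hsymmOn (R := R) S 0 = 1 := by
  rw [hsymmOn, sym_zero, sum_singleton]
  rfl

theorem hsymmOn_insert {a : σ} {S : Finset σ} (ha : a ∉ S) (k : ℕ) :
    hsymmOn (R := R) (insert a S) k = ∑ p ∈ antidiagonal k, X a ^ p.1 * hsymmOn S p.2 := by
  rw [hsymmOn, ← sum_coe_sort, ← (symInsertEquiv ha).symm.sum_comp, Fintype.sum_sigma,
    Nat.sum_antidiagonal_eq_sum_range_succ_mk, ← Fin.sum_univ_eq_sum_range]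
  refine Fintype.sum_congr _ _ fun i => ?_
  simp only [symInsertEquiv_symm_apply_coe, Sym.val_eq_coe, Sym.coe_fill, Sym.coe_replicate,
    Multiset.map_add, Multiset.prod_add, Multiset.map_replicate, Multiset.prod_replicate,
    hsymmOn, mul_sum]
  rw [← sum_coe_sort (S.sym _)]
  exact Fintype.sum_congr _ _ fun _ => mul_comm _ _

theorem hsymmOn_succ_of_mem {a : σ} {S : Finset σ} (ha : a ∈ S) (k : ℕ) :
    hsymmOn (R := R) S (k + 1) = X a * hsymmOn S k + hsymmOn (S.erase a) (k + 1) := by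
  have ha' := notMem_erase a S
  rw [← insert_erase ha, hsymmOn_insert ha', hsymmOn_insert ha', erase_insert ha',
    Nat.sum_antidiagonal_succ, mul_sum, add_comm]
  simp only [pow_zero, one_mul, pow_succ', mul_assoc]

theorem pderiv_hsymmOn_of_notMem {r : σ} {S : Finset σ} (hr : r ∉ S) (k : ℕ) :
    pderiv r (hsymmOn (R := R) S k) = 0 := by
  rw [hsymmOn, map_sum]
  exact sum_eq_zero fun _ hs => pderiv_prod_map_X_of_notMem fun h => hr (mem_sym_iff.1 hs r h)

theorem pderiv_hsymmOn_succ {r : σ} {S : Finset σ} (hr : r ∈ S) (K : ℕ) :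
    pderiv r (hsymmOn (R := R) S (K + 1)) =
      ∑ p ∈ antidiagonal K, hsymmOn S p.1 * X r ^ p.2 := by
  induction K with
  | zero =>
    rw [hsymmOn_succ_of_mem hr, map_add, pderiv_mul, pderiv_X_self,
      pderiv_hsymmOn_of_notMem (notMem_erase r S)]
    simp
  | succ K ih =>
    rw [hsymmOn_succ_of_mem hr, map_add, pderiv_mul, pderiv_X_self,
      pderiv_hsymmOn_of_notMem (notMem_erase r S), ih, Nat.sum_antidiagonal_succ', mul_sum]
    simp only [pow_zero, mul_one, one_mul, add_zero, pow_succ', mul_left_comm (X r)]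

noncomputable def hsymmSeries (S : Finset σ) : PowerSeries (MvPolynomial σ R) :=
  PowerSeries.mk (hsymmOn S)

theorem hsymmSeries_empty : hsymmSeries (R := R) (∅ : Finset σ) = 1 := by
  ext (_ | k)
  · simp [hsymmSeries]
  · simp [hsymmSeries, hsymmOn]

theorem hsymmSeries_insert {a : σ} {S : Finset σ} (ha : a ∉ S) :
    hsymmSeries (R := R) (insert a S) =
      PowerSeries.rescale (X a) (PowerSeries.mk 1) * hsymmSeries S := by
  ext k
  simp only [hsymmSeries, PowerSeries.coeff_mk, PowerSeries.coeff_mul, PowerSeries.coeff_rescale,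
    Pi.one_apply, mul_one, hsymmOn_insert ha]

end CommSemiring

section CommRing
variable [CommRing R]

theorem prod_sub_X_eq_sum_esymmOn (T : Finset σ) (y : MvPolynomial σ R) :
    ∏ i ∈ T, (y - X i) = ∑ p ∈ antidiagonal #T, (-1) ^ p.1 * esymmOn T p.1 * y ^ p.2 := by
  have vieta := congrArg (Polynomial.eval y) (Multiset.prod_X_sub_X_eq_sum_esymm (T.val.map X))
  simp only [Polynomial.eval_multiset_prod, Multiset.map_map, Function.comp_def,
    Polynomial.eval_sub, Polynomial.eval_X, Polynomial.eval_C, Polynomial.eval_finsetSum, Polynomial.eval_mul,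
    Polynomial.eval_pow, Polynomial.eval_neg, Polynomial.eval_one, Multiset.card_map,
    Finset.esymm_map_val] at vieta
  rw [prod_eq_multiset_prod, vieta,
    Nat.sum_antidiagonal_eq_sum_range_succ fun i j => (-1) ^ i * esymmOn T i * y ^ j]
  exact sum_congr rfl fun _ _ => by rw [esymmOn, card_def, mul_assoc]

theorem coeff_prod_one_sub_C_mul_X {ι : Type*} (S : Finset ι) (f : ι → R) (k : ℕ) :
    PowerSeries.coeff k (∏ i ∈ S, (1 - PowerSeries.C (f i) * PowerSeries.X)) =
      (-1) ^ k * ∑ t ∈ S.powersetCard k, ∏ i ∈ t, f i := by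
  have hneg : ∀ i ∈ S, 1 - PowerSeries.C (f i) * PowerSeries.X =
      1 + PowerSeries.C (-f i) * PowerSeries.X := by
    intro i _; rw [map_neg, neg_mul, sub_eq_add_neg]
  simp only [prod_congr rfl hneg, prod_one_add, map_sum, prod_mul_distrib, ← map_prod, prod_const,
    PowerSeries.coeff_C_mul_X_pow, ← sum_filter, powersetCard_eq_filter, mul_sum]
  refine sum_congr (filter_congr fun _ _ => eq_comm) fun t ht => ?_
  rw [prod_neg, (mem_filter.1 ht).2]

variable [DecidableEq σ]

theorem hsymmSeries_mul_prod_one_sub_C_mul_X (S : Finset σ) :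
    hsymmSeries (R := R) S * ∏ i ∈ S, (1 - PowerSeries.C (X i) * PowerSeries.X) = 1 := by
  induction S using Finset.induction_on with
  | empty => rw [hsymmSeries_empty, prod_empty, one_mul]
  | insert a S ha ih =>
    have geom : PowerSeries.rescale (X a) (PowerSeries.mk 1) *
        (1 - PowerSeries.C (X a) * PowerSeries.X) = (1 : PowerSeries (MvPolynomial σ R)) := by
      rw [← PowerSeries.rescale_X, ← map_one (PowerSeries.rescale (X a)), ← map_sub, ← map_mul,
        PowerSeries.mk_one_mul_one_sub_eq_one, map_one]
    rw [hsymmSeries_insert ha, prod_insert ha, mul_mul_mul_comm, geom, ih, one_mul]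

theorem neg_one_pow_mul_esymmOn_sub_hsymmOn_mem {A T : Finset σ} (hAT : Disjoint A T)
    {I : Ideal (MvPolynomial σ R)} (hI : ∀ j ∈ Icc 1 #(A ∪ T), esymmOn (A ∪ T) j ∈ I) (k : ℕ) :
    (-1) ^ k * esymmOn T k - hsymmOn A k ∈ I := by
  let P (U : Finset σ) : PowerSeries (MvPolynomial σ R) :=
    ∏ i ∈ U, (1 - PowerSeries.C (X i) * PowerSeries.X)
  let Φ := PowerSeries.map (Ideal.Quotient.mk I)
  have hunion : Φ (P (A ∪ T)) = 1 := by
    ext j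
    rw [PowerSeries.coeff_map, coeff_prod_one_sub_C_mul_X, PowerSeries.coeff_one]
    rcases Nat.eq_zero_or_pos j with rfl | hj
    · simp
    · rw [if_neg hj.ne', Ideal.Quotient.eq_zero_iff_mem]
      rcases le_or_gt j #(A ∪ T) with hjn | hjn
      · exact I.mul_mem_left _ (hI j (mem_Icc.2 ⟨hj, hjn⟩))
      · rw [powersetCard_eq_empty.2 hjn, sum_empty, mul_zero]
        exact I.zero_mem
  have hseries : Φ (P T) = Φ (hsymmSeries A) :=
    calc Φ (P T) = Φ (hsymmSeries A * P A) * Φ (P T) := by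
          rw [hsymmSeries_mul_prod_one_sub_C_mul_X, map_one, one_mul]
      _ = Φ (P (A ∪ T)) * Φ (hsymmSeries A) := by
          simp only [P, prod_union hAT, map_mul]; ring
      _ = Φ (hsymmSeries A) := by rw [hunion, one_mul]
  have hcoeff := congrArg (PowerSeries.coeff k) hseries
  simp only [Φ, P, PowerSeries.coeff_map, coeff_prod_one_sub_C_mul_X, hsymmSeries,
    PowerSeries.coeff_mk] at hcoeff
  exact Ideal.Quotient.eq.1 hcoeff

theorem prod_X_sub_X_sub_pderiv_hsymmOn_mem {A T : Finset σ} (hAT : Disjoint A T) {r : σ}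
    (hr : r ∈ A) {I : Ideal (MvPolynomial σ R)}
    (hI : ∀ j ∈ Icc 1 #(A ∪ T), esymmOn (A ∪ T) j ∈ I) :
    ∏ i ∈ T, (X r - X i) - pderiv r (hsymmOn A (#T + 1)) ∈ I := by
  rw [prod_sub_X_eq_sum_esymmOn, pderiv_hsymmOn_succ hr, ← sum_sub_distrib]
  refine I.sum_mem fun p _ => ?_
  rw [← sub_mul]
  exact I.mul_mem_right _ (neg_one_pow_mul_esymmOn_sub_hsymmOn_mem hAT hI p.1)

end CommRing

/-- For `1 ≤ r ≤ m ≤ n`: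
`∏_{m < i ≤ n} (x_r - x_i) ≡ ∂_r h_{n-m+1,m}  (mod K(n))`. -/
theorem prod_congruent_pderiv_hsym (n m r : ℕ) (hr : 1 ≤ r) (hrm : r ≤ m) (hmn : m ≤ n) :
    (∏ i ∈ Finset.Icc (m + 1) n, (MvPolynomial.X r - MvPolynomial.X i)) -
      MvPolynomial.pderiv r (hsym (n - m + 1) m) ∈ Kideal n := by
  have hAT : Disjoint (Icc 1 m) (Icc (m + 1) n) :=
    disjoint_left.2 fun x hx hx' => by rw [mem_Icc] at hx hx'; omega
  have hunion : Icc 1 m ∪ Icc (m + 1) n = Icc 1 n := by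
    ext; simp only [mem_union, mem_Icc]; omega
  have hK : ∀ j ∈ Icc 1 #(Icc 1 n), esymmOn (Icc 1 n) j ∈ Kideal n := by
    rw [Nat.card_Icc, add_tsub_cancel_right]
    exact fun j hj => Ideal.subset_span ⟨j, by simpa using hj, rfl⟩
  have key := prod_X_sub_X_sub_pderiv_hsymmOn_mem hAT (mem_Icc.2 ⟨hr, hrm⟩) (hunion ▸ hK)
  rwa [Nat.card_Icc, Nat.add_sub_add_right] at key
end

section
/- The pattern I = {(1,2),(2,1),(1,3),(3,1),(2,3),(3,2)} ⊆ {1,…,4}×{1,…,4} is not 4-universal. In fact, the traceless nilpotent 4×4 matrix A = E_{12} + E_{34} (with entry 1 in positions (1,2) and (3,4) and 0 elsewhere) is not unitarily similar to any 4×4 matrix X with x_{ij} = 0 for all (i,j) ∈ I. -/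
/-- The matrix `A = E_{12} + E_{34}` (1-based positions). -/
noncomputable def A17 : Matrix (Fin 4) (Fin 4) ℂ :=
  Matrix.single 0 1 1 + Matrix.single 2 3 1

namespace Matrix

variable {n : Type*}

def IsArrowhead {α : Type*} [Zero α] (X : Matrix n n α) (l : n) : Prop :=
  ∀ i j, i ≠ j → i ≠ l → j ≠ l → X i j = 0

variable [Fintype n] {K : Type*} [Field K] {X : Matrix n n K} {l : n}

theorem IsArrowhead.mul_self_apply (hX : X.IsArrowhead l) {i : n} (hi : i ≠ l) (j : n) :
    (X * X) i j = X i i * X i j + X i l * X l j :=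
  Fintype.sum_eq_add i l hi fun k hk => by simp only [hX i k (Ne.symm hk.1) hi hk.2, zero_mul]

variable [DecidableEq n]

theorem IsArrowhead.exists_eq_vecMulVec_of_mul_self_eq_zero (hX : X.IsArrowhead l)
    (hsq : X * X = 0) : ∃ v w : n → K, X = vecMulVec v w := by
  have hrow : ∀ i ≠ l, ∀ j, X i i * X i j + X i l * X l j = 0 := fun i hi j => by
    rw [← hX.mul_self_apply hi, hsq, zero_apply]
  have hcross : ∀ i j, i ≠ j → i ≠ l → j ≠ l → X i l * X l j = 0 := fun i j hij hi hj => by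
    simpa [hX i j hij hi hj] using hrow i hi j
  by_cases hd : X l l = 0
  · have hdiag : ∀ i ≠ l, X i i = 0 := fun i hi => (pow_eq_zero_iff three_ne_zero).mp <| by
      linear_combination X i i * hrow i hi i - X l i * hrow i hi l + X l i * X i l * hd
    have hcore : ∀ i j, i ≠ l → j ≠ l → X i j = 0 := fun i j hi hj => by
      rcases eq_or_ne i j with rfl | hij
      · exact hdiag i hi
      · exact hX i j hij hi hj
    have hprod : ∀ i j, i ≠ l → j ≠ l → X i l * X l j = 0 := fun i j hi hj => by
      rcases eq_or_ne i j with rfl | hij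
      · simpa [hdiag i hi] using hrow i hi i
      · exact hcross i j hij hi hj
    by_cases hcol : ∀ i ≠ l, X i l = 0
    · refine ⟨Pi.single l 1, X l, ?_⟩
      ext i j
      rcases eq_or_ne i l with rfl | hi
      · simp [vecMulVec_apply]
      rcases eq_or_ne j l with rfl | hj
      · simp [vecMulVec_apply, hcol i hi, hi]
      · simp [vecMulVec_apply, hcore i j hi hj, hi]
    · push Not at hcol
      obtain ⟨k, hk, hkl⟩ := hcol
      have hlrow : ∀ j, X l j = 0 := fun j => by
        rcases eq_or_ne j l with rfl | hj
        · exact hd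
        · exact (mul_eq_zero.mp (hprod k j hk hj)).resolve_left hkl
      refine ⟨fun i => X i l, Pi.single l 1, ?_⟩
      ext i j
      rcases eq_or_ne j l with rfl | hj
      · simp [vecMulVec_apply]
      rcases eq_or_ne i l with rfl | hi
      · simp [vecMulVec_apply, hlrow j, hj]
      · simp [vecMulVec_apply, hcore i j hi hj, hj]
  · refine ⟨fun i => X i l, fun j => X l j / X l l, ?_⟩
    ext i j
    rw [vecMulVec_apply, mul_div_assoc', eq_div_iff hd]
    rcases eq_or_ne i l with rfl | hi
    · ring
    rcases eq_or_ne j l with rfl | hj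
    · ring
    rcases eq_or_ne i j with rfl | hij
    · -- `X i i` is `0` or `-X l l`
      have hroot : (X i i * (X i i + X l l)) ^ 2 = 0 := by
        linear_combination (X i i + X l l) ^ 2 * hrow i hi i - X l i * (X i i + X l l) * hrow i hi l
      linear_combination (pow_eq_zero_iff two_ne_zero).mp hroot - hrow i hi i
    · rw [hX i j hij hi hj, hcross i j hij hi hj, zero_mul]

theorem trace_mul_conjTranspose_vecMulVec_sq {R : Type*} [CommRing R] [StarRing R] (v w : n → R) :
    ((vecMulVec v w * (vecMulVec v w)ᴴ) ^ 2).trace =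
      (vecMulVec v w * (vecMulVec v w)ᴴ).trace ^ 2 := by
  simp only [conjTranspose_vecMulVec, vecMulVec_mul_vecMulVec, sq, trace_vecMulVec,
    dotProduct_smul, smul_dotProduct, smul_eq_mul, dotProduct_comm (star v)]

theorem not_isArrowhead_unitary_conj {A : Matrix n n ℂ} (hA : A * A = 0)
    (hP : IsIdempotentElem (A * Aᴴ)) (h0 : (A * Aᴴ).trace ≠ 0) (h1 : (A * Aᴴ).trace ≠ 1)
    {U : Matrix n n ℂ} (hU : U ∈ unitaryGroup n ℂ) (l : n) :
    ¬ (U * A * star U).IsArrowhead l := by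
  intro hX
  set φ := Unitary.conjStarAlgAut ℂ (Matrix n n ℂ) ⟨U, hU⟩
  have hφ : ∀ B, φ B = U * B * star U := fun _ => rfl
  have htrace : ∀ B, (φ B).trace = B.trace := fun B => by
    rw [hφ, trace_mul_cycle, hU.1, one_mul]
  obtain ⟨v, w, hvw⟩ := hX.exists_eq_vecMulVec_of_mul_self_eq_zero <| by
    rw [← hφ, ← map_mul, hA, map_zero]
  have hXX : vecMulVec v w * (vecMulVec v w)ᴴ = φ (A * Aᴴ) := by
    rw [← hvw, ← star_eq_conjTranspose, ← star_eq_conjTranspose, ← hφ, map_mul, map_star]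
  have key := trace_mul_conjTranspose_vecMulVec_sq v w
  rw [hXX, sq, ← map_mul, hP.eq, htrace] at key
  rcases mul_eq_zero.mp (show (A * Aᴴ).trace * ((A * Aᴴ).trace - 1) = 0 by
    linear_combination -key) with h | h
  exacts [h0 h, h1 (sub_eq_zero.mp h)]

end Matrix

open Matrix

theorem A17_mul_self : A17 * A17 = 0 := by
  simp [A17, add_mul, mul_add, single_mul_single_of_ne]

theorem A17_mul_conjTranspose : A17 * A17ᴴ = single 0 0 1 + single 2 2 1 := by
  simp [A17, add_mul, mul_add, single_mul_single_of_ne, conjTranspose_single]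

theorem trace_A17 : A17.trace = 0 := by
  simp [A17]

theorem isIdempotentElem_A17_mul_conjTranspose : IsIdempotentElem (A17 * A17ᴴ) := by
  rw [A17_mul_conjTranspose, IsIdempotentElem]
  simp [add_mul, mul_add, single_mul_single_of_ne]

theorem trace_A17_mul_conjTranspose : (A17 * A17ᴴ).trace = 2 := by
  rw [A17_mul_conjTranspose]
  norm_num

theorem isArrowhead_of_eq_zero_on_pattern {X : Matrix (Fin 4) (Fin 4) ℂ}
    (h : ∀ i j : Fin 4, ((i : ℕ) + 1, (j : ℕ) + 1) ∈
      ({(1, 2), (2, 1), (1, 3), (3, 1), (2, 3), (3, 2)} : Finset (ℕ × ℕ)) → X i j = 0) :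
    X.IsArrowhead 3 :=
  fun i j hij hi hj => h i j (by revert i j; decide)

/-- The pattern `{(1,2),(2,1),(1,3),(3,1),(2,3),(3,2)}` is not 4-universal; in fact
`A = E_{12} + E_{34}` is not unitarily similar to any matrix vanishing on it. -/
theorem first_exceptional_not_universal :
    ¬ IsUniversal 4 ({(1, 2), (2, 1), (1, 3), (3, 1), (2, 3), (3, 2)} : Finset (ℕ × ℕ)) ∧
    ¬ ∃ U ∈ Matrix.unitaryGroup (Fin 4) ℂ,
        ∀ i j : Fin 4,
          ((i : ℕ) + 1, (j : ℕ) + 1) ∈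
              ({(1, 2), (2, 1), (1, 3), (3, 1), (2, 3), (3, 2)} : Finset (ℕ × ℕ)) →
            (U * A17 * star U) i j = 0 := by
  refine ⟨fun h => ?notConj (h A17 trace_A17), ?notConj⟩
  rintro ⟨U, hU, hzero⟩
  exact not_isArrowhead_unitary_conj A17_mul_self isIdempotentElem_A17_mul_conjTranspose
    (trace_A17_mul_conjTranspose ▸ two_ne_zero) (trace_A17_mul_conjTranspose ▸ by norm_num) hU 3
    (isArrowhead_of_eq_zero_on_pattern hzero)
end
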